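/- arXiv:0809.1059 — 10 statements merged into one kernel-verified Lean document; each statement's English description precedes it below -/
import Mathlib

section
/- For any vector a in (ℤ/dℤ)^n, there exists an invertible n×n matrix L over ℤ/dℤ and a scalar k in ℤ/dℤ such that L·a = k·e₁, where e₁ is the first standard basis vector. -/
/-!
Over a principal ideal domain, the Smith normal form of the cyclic submodule `R ∙ a` provides a
basis of `Rⁿ` in which `a` is a multiple `k • b j` of a single basis vector; the coordinate map
of that basis, with `j` swapped to the first index, is an invertible matrix sending `a` to `k e₁`.
Applied over `ℤ` and reduced modulo `d`, this gives the statement over `ℤ/dℤ`.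
-/

open Matrix Module

theorem Module.Basis.exists_smul_eq_of_isPrincipalIdealRing {ι R M : Type*} [CommRing R]
    [IsDomain R] [IsPrincipalIdealRing R] [AddCommGroup M] [Module R M] [Finite ι] [Nonempty ι]
    (b : Basis ι R M) (v : M) : ∃ (b' : Basis ι R M) (j : ι) (k : R), k • b' j = v := by
  obtain ⟨n, bM, bN, f, c, snf⟩ := (R ∙ v).smithNormalForm b
  have hn : n ≤ 1 := by
    have := finrank_span_le_card (R := R) ({v} : Set M)
    rwa [finrank_eq_card_basis bN, Fintype.card_fin, Set.toFinset_singleton,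
      Finset.card_singleton] at this
  let x : R ∙ v := ⟨v, Submodule.mem_span_singleton_self v⟩
  have hv : ∑ i, bN.repr x i • (bN i : M) = v := by
    have := congrArg Subtype.val (bN.sum_repr x)
    rwa [Submodule.coe_sum] at this
  obtain _ | _ | n := n
  · exact ⟨b, Classical.arbitrary ι, 0, by simp [← hv]⟩
  · refine ⟨bM, f 0, bN.repr x 0 * c 0, ?_⟩
    rw [← smul_smul, ← snf]
    simpa using hv
  · omega

theorem Module.Basis.exists_isUnit_det_mulVec_smul_eq_single {ι R : Type*} [CommRing R]
    [Fintype ι] [DecidableEq ι] (b : Basis ι R (ι → R)) (i j : ι) (k : R) :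
    ∃ L : Matrix ι ι R, IsUnit L.det ∧ L *ᵥ (k • b j) = Pi.single i k := by
  let b' := b.reindex (Equiv.swap i j)
  refine ⟨LinearMap.toMatrix' b'.equivFun.toLinearMap, ?_, ?_⟩
  · rw [LinearMap.det_toMatrix']
    exact LinearEquiv.isUnit_det' _
  · have : b j = b' i := by simp [b']
    ext l
    rw [LinearMap.toMatrix'_mulVec, this]
    simp [Pi.single_apply, Finsupp.single_apply, eq_comm]

theorem exists_isUnit_det_mulVec_eq_single_of_isPrincipalIdealRing {ι R : Type*} [CommRing R]
    [IsDomain R] [IsPrincipalIdealRing R] [Fintype ι] [DecidableEq ι] (a : ι → R) (i : ι) :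
    ∃ (L : Matrix ι ι R) (k : R), IsUnit L.det ∧ L *ᵥ a = Pi.single i k := by
  have : Nonempty ι := ⟨i⟩
  obtain ⟨b, j, k, rfl⟩ := (Pi.basisFun R ι).exists_smul_eq_of_isPrincipalIdealRing a
  obtain ⟨L, hL, hLa⟩ := b.exists_isUnit_det_mulVec_smul_eq_single i j k
  exact ⟨L, k, hL, hLa⟩

theorem exists_isUnit_det_mulVec_eq_single_of_surjective {ι R S : Type*} [CommRing R]
    [CommRing S] [Fintype ι] [DecidableEq ι] (φ : R →+* S) (hφ : Function.Surjective φ)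
    (i : ι) (h : ∀ a : ι → R, ∃ (L : Matrix ι ι R) (k : R), IsUnit L.det ∧ L *ᵥ a = Pi.single i k)
    (a : ι → S) : ∃ (L : Matrix ι ι S) (k : S), IsUnit L.det ∧ L *ᵥ a = Pi.single i k := by
  obtain ⟨a', rfl⟩ : ∃ a', φ ∘ a' = a :=
    ⟨Function.surjInv hφ ∘ a, funext fun l => Function.surjInv_eq hφ (a l)⟩
  obtain ⟨L, k, hL, hLa⟩ := h a'
  refine ⟨L.map φ, φ k, ?_, ?_⟩
  · rw [← RingHom.mapMatrix_apply, ← RingHom.map_det]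
    exact hL.map φ
  · ext l
    rw [← RingHom.map_mulVec, hLa, Pi.apply_single (fun _ => φ) (fun _ => map_zero φ)]

theorem stmt_0_general (d n : ℕ) (hn : 1 ≤ n) (a : Fin n → ZMod d) :
    ∃ (L : Matrix (Fin n) (Fin n) (ZMod d)) (k : ZMod d),
      IsUnit L.det ∧ L.mulVec a = Pi.single (⟨0, hn⟩ : Fin n) k :=
  exists_isUnit_det_mulVec_eq_single_of_surjective (Int.castRingHom (ZMod d))
    ZMod.intCast_surjective _
    (fun a' => exists_isUnit_det_mulVec_eq_single_of_isPrincipalIdealRing a' _) a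

/-- For any vector `a` in `(ℤ/dℤ)^n`, there exists an invertible `n×n` matrix `L`
over `ℤ/dℤ` and a scalar `k` such that `L·a = k·e₁`. -/
theorem stmt_0 (d n : ℕ) (hd : 2 ≤ d) (hn : 1 ≤ n) (a : Fin n → ZMod d) :
    ∃ (L : Matrix (Fin n) (Fin n) (ZMod d)) (k : ZMod d),
      IsUnit L.det ∧ L.mulVec a = Pi.single (⟨0, hn⟩ : Fin n) k :=
  stmt_0_general d n hn a
end

section
/- Let d be an odd integer ≥ 2 and a, b ∈ ℤ/dℤ, and let δ be a generator of the ideal generated by a and b (a gcd of a and b). Then there exist units u, v of ℤ/dℤ such that δ = u·a + v·b. -/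
/-!
In a local ring in which `2` is a unit, let `δ ≠ 0` generate `(a, b)`, with `a = α δ`,
`b = β δ` and `δ = s a + t b`. Then `(1 - sα - tβ) δ = 0` forces `sα + tβ`, hence one of
`α, β`, say `α`, to be a unit; as `(1 - β) + (1 + β) = 2`, one of `1 ∓ β` is a unit `w`, and
`δ = (w α⁻¹) a ± b`. The property passes to finite products and along ring isomorphisms, and
for odd `d` the Chinese remainder theorem splits `ℤ/dℤ` into the local rings `ℤ/p^kℤ`, `p` odd.
-/

open Ideal

def UnitBezout (R : Type*) [CommRing R] : Prop :=
  ∀ a b δ : R, span {δ} = span {a, b} → ∃ u v : Rˣ, δ = u * a + v * b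

theorem span_singleton_eq_span_pair_map {R S : Type*} [CommRing R] [CommRing S] (f : R →+* S)
    {a b δ : R} (h : span {δ} = span {a, b}) : span {f δ} = span {f a, f b} := by
  simpa only [map_span, Set.image_singleton, Set.image_pair] using congrArg (map f) h

namespace UnitBezout

section IsLocalRing

variable {R : Type*} [CommRing R] [IsLocalRing R]

theorem exists_units_mul_add_mul_eq_one (h2 : IsUnit (2 : R)) {α : R} (hα : IsUnit α) (β : R) :
    ∃ u v : Rˣ, u * α + v * β = 1 := by
  obtain ⟨α, rfl⟩ := hα
  have hsum : IsUnit ((1 - β) + (1 + β)) := by rwa [sub_add_add_cancel, one_add_one_eq_two]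
  rcases IsLocalRing.isUnit_or_isUnit_of_isUnit_add hsum with ⟨w, hw⟩ | ⟨w, hw⟩
  · exact ⟨w * α⁻¹, 1, by simp [hw]⟩
  · exact ⟨w * α⁻¹, -1, by simp [hw]⟩

theorem of_isLocalRing (h2 : IsUnit (2 : R)) : UnitBezout R := by
  intro a b δ h
  obtain ⟨s, t, hst⟩ := mem_span_pair.mp (h ▸ mem_span_singleton_self δ)
  obtain ⟨α, rfl⟩ := mem_span_singleton'.mp (h ▸ subset_span (by simp) : a ∈ span {δ})
  obtain ⟨β, rfl⟩ := mem_span_singleton'.mp (h ▸ subset_span (by simp) : b ∈ span {δ})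
  rcases IsLocalRing.isUnit_or_isUnit_one_sub_self (s * α + t * β) with he | he
  · rcases IsLocalRing.isUnit_or_isUnit_of_isUnit_add he with hα | hβ
    · obtain ⟨u, v, huv⟩ := exists_units_mul_add_mul_eq_one h2 (isUnit_of_mul_isUnit_right hα) β
      exact ⟨u, v, by linear_combination -δ * huv⟩
    · obtain ⟨v, u, hvu⟩ := exists_units_mul_add_mul_eq_one h2 (isUnit_of_mul_isUnit_right hβ) α
      exact ⟨u, v, by linear_combination -δ * hvu⟩
  · have hδ : δ = 0 := he.mul_right_eq_zero.mp (by linear_combination -hst)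
    exact ⟨1, 1, by simp [hδ]⟩

end IsLocalRing

theorem pi {ι : Type*} {R : ι → Type*} [∀ i, CommRing (R i)] (h : ∀ i, UnitBezout (R i)) :
    UnitBezout (∀ i, R i) := by
  intro a b δ hδ
  choose u v huv using fun i ↦ h i (a i) (b i) (δ i)
    (span_singleton_eq_span_pair_map (Pi.evalRingHom R i) hδ)
  exact ⟨MulEquiv.piUnits.symm u, MulEquiv.piUnits.symm v, funext huv⟩

theorem of_ringEquiv {R S : Type*} [CommRing R] [CommRing S] (e : R ≃+* S) (h : UnitBezout S) :
    UnitBezout R := by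
  intro a b δ hδ
  obtain ⟨u, v, huv⟩ := h _ _ _ (span_singleton_eq_span_pair_map e.toRingHom hδ)
  refine ⟨Units.map e.symm.toMonoidHom u, Units.map e.symm.toMonoidHom v, e.injective ?_⟩
  simpa using huv

end UnitBezout

theorem ZMod.isLocalRing_prime_pow {p k : ℕ} (hp : p.Prime) (hk : k ≠ 0) :
    IsLocalRing (ZMod (p ^ k)) := by
  have : Fact (1 < p ^ k) := ⟨Nat.one_lt_pow hk hp.one_lt⟩
  refine IsLocalRing.of_isUnit_or_isUnit_of_isUnit_add fun a b hab ↦ ?_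
  rw [← ZMod.natCast_zmod_val a, ← ZMod.natCast_zmod_val b] at hab ⊢
  simp only [← Nat.cast_add, ZMod.isUnit_natCast_iff_not_dvd_pow hp (Nat.pos_of_ne_zero hk)]
    at hab ⊢
  by_contra! h
  exact hab (dvd_add h.1 h.2)

theorem ZMod.unitBezout_of_odd {d : ℕ} (hodd : Odd d) : UnitBezout (ZMod d) := by
  have hd : d ≠ 0 := hodd.pos.ne'
  refine UnitBezout.of_ringEquiv (ZMod.equivPi d hd) (UnitBezout.pi fun p ↦ ?_)
  have hp : (p : ℕ).Prime := Nat.prime_of_mem_primeFactors p.2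
  have hpd : (p : ℕ) ∣ d := Nat.dvd_of_mem_primeFactors p.2
  have := ZMod.isLocalRing_prime_pow hp (hp.factorization_pos_of_dvd hd hpd).ne'
  have hp2 : (p : ℕ) ≠ 2 := fun h ↦ hodd.not_two_dvd_nat (h ▸ hpd)
  have h2 : IsUnit ((2 : ℕ) : ZMod (p ^ d.factorization p)) :=
    (ZMod.isUnit_iff_coprime _ _).mpr
      (((Nat.coprime_primes Nat.prime_two hp).mpr hp2.symm).pow_right _)
  exact UnitBezout.of_isLocalRing (by exact_mod_cast h2)

theorem stmt_5_general (d : ℕ) (hodd : Odd d) (a b δ : ZMod d)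
    (hgcd : Ideal.span {δ} = Ideal.span ({a, b} : Set (ZMod d))) :
    ∃ u v : (ZMod d)ˣ, δ = (u : ZMod d) * a + (v : ZMod d) * b :=
  ZMod.unitBezout_of_odd hodd a b δ hgcd

/-- If `d` is odd and `δ` is a gcd of `a` and `b` in `ℤ/dℤ` (a generator of the ideal
generated by `a` and `b`), then `δ = u·a + v·b` for some units `u, v`. -/
theorem stmt_5 (d : ℕ) (hd : 2 ≤ d) (hodd : Odd d) (a b δ : ZMod d)
    (hgcd : Ideal.span {δ} = Ideal.span ({a, b} : Set (ZMod d))) :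
    ∃ u v : (ZMod d)ˣ, δ = (u : ZMod d) * a + (v : ZMod d) * b :=
  stmt_5_general d hodd a b δ hgcd
end

section
/- Let d ≥ 2, let a₁,…,aₙ ∈ ℤ/dℤ and let δ be a gcd of them (a generator of the ideal they generate). Then for each index i there exist coefficients k₁,…,kₙ ∈ ℤ/dℤ with kᵢ a unit such that δ = k₁·a₁ + ⋯ + kₙ·aₙ. -/
/-- Key arithmetic lemma: if no prime divides `c`, `e` and `d` simultaneously,
then some `c + s*e` is coprime to `d`. -/
lemma exists_coprime_add_mul (d c e : ℕ) (hd0 : d ≠ 0)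
    (h : ∀ p : ℕ, p.Prime → p ∣ d → p ∣ c → p ∣ e → False) :
    ∃ s : ℕ, Nat.Coprime (c + s * e) d := by
  refine ⟨∏ p ∈ d.primeFactors.filter (fun p => ¬ p ∣ c), p, ?_⟩
  set s := ∏ p ∈ d.primeFactors.filter (fun p => ¬ p ∣ c), p with hs
  rw [Nat.coprime_iff_gcd_eq_one]
  by_contra hg
  obtain ⟨p, hp, hpdvd⟩ := Nat.exists_prime_and_dvd hg
  have hpd : p ∣ d := hpdvd.trans (Nat.gcd_dvd_right _ _)
  have hpcse : p ∣ c + s * e := hpdvd.trans (Nat.gcd_dvd_left _ _)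
  have hps_iff : p ∣ s ↔ ¬ p ∣ c := by
    rw [hs, hp.prime.dvd_finset_prod_iff]
    constructor
    · rintro ⟨q, hq, hpq⟩
      simp only [Finset.mem_filter, Nat.mem_primeFactors] at hq
      obtain rfl := (Nat.prime_dvd_prime_iff_eq hp hq.1.1).mp hpq
      exact hq.2
    · intro hpc
      exact ⟨p, by simp [Finset.mem_filter, Nat.mem_primeFactors, hp, hpd, hd0, hpc], dvd_rfl⟩
  by_cases hpc : p ∣ c
  · have hpse : p ∣ s * e := (Nat.dvd_add_right hpc).mp hpcse
    rcases hp.dvd_mul.mp hpse with hpse | hpe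
    · exact (hps_iff.mp hpse) hpc
    · exact h p hp hpd hpc hpe
  · have hps : p ∣ s := hps_iff.mpr hpc
    exact hpc ((Nat.dvd_add_iff_left (hps.mul_right e)).mpr hpcse)

/-- If `δ` is a gcd of `a₁,…,aₙ` in `ℤ/dℤ`, then for each index `i` there are
coefficients `k₁,…,kₙ` with `kᵢ` a unit such that `δ = ∑ kⱼ·aⱼ`. -/
theorem stmt_6 (d n : ℕ) (hd : 2 ≤ d) (a : Fin n → ZMod d) (δ : ZMod d)
    (hgcd : Ideal.span {δ} = Ideal.span (Set.range a)) (i : Fin n) :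
    ∃ k : Fin n → ZMod d, IsUnit (k i) ∧ δ = ∑ j, k j * a j := by
  have : NeZero d := ⟨by omega⟩
  -- δ ∈ span (range a), so δ = ∑ c j * a j
  have hδmem : δ ∈ Ideal.span (Set.range a) := by
    rw [← hgcd]; exact Ideal.mem_span_singleton_self δ
  obtain ⟨c, hc⟩ := (Submodule.mem_span_range_iff_exists_fun _).mp hδmem
  simp only [smul_eq_mul] at hc
  -- a i ∈ span {δ}, so a i = t * δ
  have haimem : a i ∈ Ideal.span {δ} := by
    rw [hgcd]; exact Ideal.subset_span ⟨i, rfl⟩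
  obtain ⟨t, ht⟩ := Ideal.mem_span_singleton'.mp haimem
  set e : ZMod d := 1 - t * c i with he
  -- no prime divides (c i).val, e.val and d simultaneously
  have hcop : ∀ p : ℕ, p.Prime → p ∣ d → p ∣ (c i).val → p ∣ e.val → False := by
    intro p hp hpd hpc hpe
    haveI : Fact p.Prime := ⟨hp⟩
    have hcv : (((c i).val : ℕ) : ZMod d) = c i := by
      rw [ZMod.natCast_val, ZMod.cast_id]
    have hev : ((e.val : ℕ) : ZMod d) = e := by
      rw [ZMod.natCast_val, ZMod.cast_id]
    have h1 : (ZMod.castHom hpd (ZMod p)) (c i) = 0 := by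
      rw [← hcv, map_natCast]
      exact (ZMod.natCast_eq_zero_iff _ _).mpr hpc
    have h2 : (ZMod.castHom hpd (ZMod p)) e = 0 := by
      rw [← hev, map_natCast]
      exact (ZMod.natCast_eq_zero_iff _ _).mpr hpe
    rw [he, map_sub, map_one, map_mul, h1, mul_zero, sub_zero] at h2
    exact one_ne_zero h2
  obtain ⟨s, hscop⟩ := exists_coprime_add_mul d (c i).val e.val (by omega) hcop
  -- define coefficients
  refine ⟨fun j => c j * (1 - (s : ZMod d) * t) + (if j = i then (s : ZMod d) else 0), ?_, ?_⟩
  · have : (c i) * (1 - (s : ZMod d) * t) + (s : ZMod d)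
        = (((c i).val + s * e.val : ℕ) : ZMod d) := by
      push_cast
      rw [ZMod.natCast_val, ZMod.natCast_val, ZMod.cast_id, ZMod.cast_id, he]
      ring
    show IsUnit (c i * (1 - (s : ZMod d) * t) + if i = i then (s : ZMod d) else 0)
    rw [if_pos rfl, this]
    exact (ZMod.isUnit_iff_coprime _ d).mpr hscop
  · have hite : (s : ZMod d) * a i = ∑ j, if j = i then (s : ZMod d) * a j else 0 := by
      simp
    calc δ = (1 - (s : ZMod d) * t) * δ + (s : ZMod d) * (t * δ) := by ring
      _ = (1 - (s : ZMod d) * t) * (∑ j, c j * a j) + (s : ZMod d) * a i := by rw [← ht, ← hc]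
      _ = ∑ j, (c j * (1 - (s : ZMod d) * t) + (if j = i then (s : ZMod d) else 0)) * a j := by
          rw [Finset.mul_sum, hite, ← Finset.sum_add_distrib]
          exact Finset.sum_congr rfl fun j _ => by split_ifs <;> ring
end

section
/- Let a₁, a₂ ∈ (ℤ/dℤ)^n have additive orders ν₁, ν₂. Then there exists a ℤ/dℤ-linear combination a of a₁ and a₂ whose additive order is lcm(ν₁, ν₂). -/
/-- Given `a₁, a₂` in `(ℤ/dℤ)^n`, there is a linear combination of them whose additive
order is the lcm of their additive orders. -/
theorem stmt_7 (d n : ℕ) (hd : 2 ≤ d) (hn : 1 ≤ n) (a₁ a₂ : Fin n → ZMod d) :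
    ∃ b₁ b₂ : ZMod d, addOrderOf (b₁ • a₁ + b₂ • a₂) =
      Nat.lcm (addOrderOf a₁) (addOrderOf a₂) := by
  haveI : NeZero d := ⟨by omega⟩
  have h : AddCommute a₁ a₂ := AddCommute.all _ _
  have hx : addOrderOf a₁ ≠ 0 := (addOrderOf_pos a₁).ne'
  have hy : addOrderOf a₂ ≠ 0 := (addOrderOf_pos a₂).ne'
  have key := h.addOrderOf_add_nsmul_eq_lcm hx hy
  refine ⟨((addOrderOf a₁ / Nat.factorizationLCMLeft (addOrderOf a₁) (addOrderOf a₂) : ℕ) :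
      ZMod d),
    ((addOrderOf a₂ / Nat.factorizationLCMRight (addOrderOf a₁) (addOrderOf a₂) : ℕ) :
      ZMod d), ?_⟩
  rw [Nat.cast_smul_eq_nsmul, Nat.cast_smul_eq_nsmul]
  exact key
end

section
/- Every submodule M of (ℤ/dℤ)^n of rank r admits a free basis f₁,…,fₙ of (ℤ/dℤ)^n and elements b₁,…,b_r of ℤ/dℤ with b₁ ∣ b₂ ∣ ⋯ ∣ b_r such that (b₁·f₁, …, b_r·f_r) is a generating family of M. -/
/-!
Pull `M` back to `N = π⁻¹ M ≤ ℤⁿ`. A Smith normal form gives a basis `e` of `ℤⁿ` with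
`N = ⟨a₁ e₁, …, aₙ eₙ⟩`; to reach `a₁ ∣ ⋯ ∣ aₙ`, a pair `aᵢ ∤ aⱼ` with `i < j` is replaced by
`(gcd, lcm)` through a unimodular change of `eᵢ, eⱼ`. Each step replaces `aᵢ` by a proper divisor
and fixes `a₁, …, aᵢ₋₁`, so this terminates. Reducing modulo `d` gives the basis `f` and
`b₁ ∣ ⋯ ∣ bₙ`. Finally `bₖ = 0` for `k > r`: otherwise, for a maximal ideal `𝔪` containing the
annihilator of `bₖ`, the first `k` coefficients modulo `𝔪` map `M` onto `(ℤ/dℤ ⧸ 𝔪)ᵏ`, which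
needs `k > r` generators.
-/

open Module Submodule Set Function

variable {ι R F : Type*} [CommRing R] [AddCommGroup F] [Module R F]

theorem Module.Basis.exists_coe_eq_of_span_eq_top [Finite ι] (e : Basis ι R F) {v : ι → F}
    (hv : span R (range v) = ⊤) : ∃ e' : Basis ι R F, ⇑e' = v := by
  have : Module.Finite R F := Module.Finite.of_basis e
  let T := e.constr R v
  have hT : Surjective T := by rw [← LinearMap.range_eq_top, e.constr_range, hv]
  refine ⟨e.map (LinearEquiv.ofBijective T
    (OrzechProperty.bijective_of_surjective_endomorphism T hT)), funext fun k => ?_⟩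
  simp [T]

theorem span_range_le_of_eq_off_pair {u w : ι → F} {i j : ι}
    (hi : w i ∈ span R {u i, u j}) (hj : w j ∈ span R {u i, u j})
    (hk : ∀ k, k ≠ i → k ≠ j → w k = u k) : span R (range w) ≤ span R (range u) := by
  have hpair : span R {u i, u j} ≤ span R (range u) :=
    span_mono (pair_subset (mem_range_self i) (mem_range_self j))
  rw [span_le]
  rintro _ ⟨k, rfl⟩
  by_cases hki : k = i
  · exact hpair (hki ▸ hi)
  by_cases hkj : k = j
  · exact hpair (hkj ▸ hj)
  rw [hk k hki hkj]
  exact subset_span (mem_range_self k)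

-- The new basis changes `e i, e j` by the matrix `[[α, β], [-y, x]]` of determinant `1`;
-- then `g • v i = a i • e i + a j • e j`, and for `g` a gcd, `α * a j` is an lcm.
theorem Module.Basis.exists_span_smul_update_eq [DecidableEq ι] [Finite ι] (e : Basis ι R F)
    (a : ι → R) {i j : ι} (hij : i ≠ j) {g α β x y : R} (hi : a i = g * α)
    (hj : a j = g * β) (hxy : α * x + β * y = 1) :
    ∃ e' : Basis ι R F, span R (range fun k => update (update a i g) j (α * a j) k • e' k) =
      span R (range fun k => a k • e k) := by
  set v : ι → F :=
    update (update e i (α • e i + β • e j)) j (-y • e i + x • e j) with hv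
  have hvi : v i = α • e i + β • e j := by simp [hv, update_of_ne hij]
  have hvj : v j = -y • e i + x • e j := by simp [hv]
  have hvk : ∀ k, k ≠ i → k ≠ j → v k = e k := fun k hki hkj => by
    simp [hv, update_of_ne hki, update_of_ne hkj]
  obtain ⟨e', he'⟩ := e.exists_coe_eq_of_span_eq_top (v := v) <| by
    rw [eq_top_iff, ← e.span_eq]
    refine span_range_le_of_eq_off_pair (i := i) (j := j) ?_ ?_
      fun k hki hkj => (hvk k hki hkj).symm
    · refine mem_span_pair.2 ⟨x, -β, ?_⟩
      rw [hvi, hvj]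
      linear_combination (norm := module) hxy • e i
    · refine mem_span_pair.2 ⟨y, α, ?_⟩
      rw [hvi, hvj]
      linear_combination (norm := module) hxy • e j
  refine ⟨e', ?_⟩
  rw [he']
  refine le_antisymm (span_range_le_of_eq_off_pair (i := i) (j := j) ?_ ?_ ?_)
    (span_range_le_of_eq_off_pair (i := i) (j := j) ?_ ?_ ?_)
  · refine mem_span_pair.2 ⟨1, 1, ?_⟩
    simp only [update_of_ne hij, update_self, hvi, hi, hj]
    module
  · refine mem_span_pair.2 ⟨-(β * y), α * x, ?_⟩
    simp only [update_self, hvj, hi, hj]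
    module
  · intro k hki hkj
    simp [update_of_ne hki, update_of_ne hkj, hvk k hki hkj]
  · refine mem_span_pair.2 ⟨α * x, -1, ?_⟩
    simp only [update_of_ne hij, update_self, hvi, hvj, hi, hj]
    linear_combination (norm := module) (g * α) • hxy • e i
  · refine mem_span_pair.2 ⟨β * y, 1, ?_⟩
    simp only [update_of_ne hij, update_self, hvi, hvj, hj]
    linear_combination (norm := module) (g * β) • hxy • e j
  · intro k hki hkj
    simp [update_of_ne hki, update_of_ne hkj, hvk k hki hkj]

theorem Module.Basis.exists_dvd_chain_span_smul_eq [IsDomain R] [IsPrincipalIdealRing R]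
    [LinearOrder ι] [Finite ι] (e : Basis ι R F) (a : ι → R) :
    ∃ (e' : Basis ι R F) (a' : ι → R), (∀ i j, i ≤ j → a' i ∣ a' j) ∧
      span R (range fun k => a' k • e' k) = span R (range fun k => a k • e k) := by
  have hwf : WellFounded (Pi.Lex (· < ·) (fun {_ : ι} (b c : R) => DvdNotUnit b c)) :=
    Pi.Lex.wellFounded _ fun _ => wellFounded_dvdNotUnit
  induction a using hwf.induction generalizing e with
  | _ a ih =>
  by_cases hchain : ∀ i j, i ≤ j → a i ∣ a j
  · exact ⟨e, a, hchain, rfl⟩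
  push Not at hchain
  obtain ⟨i, j, hle, hndvd⟩ := hchain
  have hij : i < j := hle.lt_of_ne (by rintro rfl; exact hndvd dvd_rfl)
  obtain ⟨α, hα⟩ := IsBezout.gcd_dvd_left (a i) (a j)
  obtain ⟨β, hβ⟩ := IsBezout.gcd_dvd_right (a i) (a j)
  obtain ⟨x, y, hxy⟩ := IsBezout.gcd_eq_sum (a i) (a j)
  set g := IsBezout.gcd (a i) (a j)
  have hg : g ≠ 0 := by
    intro hg
    rw [hg, zero_mul] at hα hβ
    exact hndvd (by rw [hα, hβ])
  have hαβ : α * x + β * y = 1 := by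
    refine mul_left_cancel₀ hg ?_
    linear_combination hxy - x * hα - y * hβ
  have hα_unit : ¬IsUnit α := fun hu =>
    hndvd (by rw [hα]; exact (hu.mul_right_dvd.2 dvd_rfl).trans (Dvd.intro β hβ.symm))
  classical
  obtain ⟨e'', he''⟩ := e.exists_span_smul_update_eq a hij.ne hα hβ hαβ
  obtain ⟨e', a', hchain', hspan'⟩ := ih (update (update a i g) j (α * a j))
    ⟨i, fun k hk => by simp [update_of_ne hk.ne, update_of_ne (hk.trans hij).ne],
      by simpa [update_of_ne hij.ne] using ⟨hg, α, hα_unit, hα⟩⟩ e''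
  exact ⟨e', a', hchain', hspan'.trans he''⟩

theorem Submodule.exists_basis_span_smul_eq [IsDomain R] [IsPrincipalIdealRing R] [Finite ι]
    (e : Basis ι R F) (N : Submodule R F) :
    ∃ (e' : Basis ι R F) (a : ι → R), span R (range fun k => a k • e' k) = N := by
  obtain ⟨m, snf⟩ := N.smithNormalForm e
  refine ⟨snf.bM, extend snf.f snf.a 0, le_antisymm ?_ ?_⟩
  · rw [span_le]
    rintro _ ⟨k, rfl⟩
    dsimp only
    by_cases hk : ∃ i, snf.f i = k
    · obtain ⟨i, rfl⟩ := hk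
      rw [snf.f.injective.extend_apply, ← snf.snf]
      exact (snf.bN i).2
    · rw [extend_apply' _ _ _ hk, Pi.zero_apply, zero_smul]
      exact zero_mem _
  · nth_rw 1 [← N.range_subtype, ← map_top, ← snf.bN.span_eq, map_span, ← range_comp]
    refine span_mono ?_
    rintro _ ⟨i, rfl⟩
    exact ⟨snf.f i, by simp [snf.f.injective.extend_apply, snf.snf]⟩

theorem Submodule.exists_basis_dvd_chain_span_smul_eq [IsDomain R] [IsPrincipalIdealRing R]
    [LinearOrder ι] [Finite ι] (e : Basis ι R F) (N : Submodule R F) :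
    ∃ (e' : Basis ι R F) (a : ι → R), (∀ i j, i ≤ j → a i ∣ a j) ∧
      span R (range fun k => a k • e' k) = N := by
  obtain ⟨e₁, a₁, hspan₁⟩ := N.exists_basis_span_smul_eq e
  obtain ⟨e', a, ha, hspan⟩ := e₁.exists_dvd_chain_span_smul_eq a₁
  exact ⟨e', a, ha, hspan.trans hspan₁⟩

theorem Submodule.exists_basis_dvd_chain_span_smul_eq_of_surjective [IsDomain R]
    [IsPrincipalIdealRing R] {S : Type*} [CommRing S] [Algebra R S]
    (hS : Surjective (algebraMap R S)) [LinearOrder ι] [Finite ι] (M : Submodule S (ι → S)) :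
    ∃ (f : Basis ι S (ι → S)) (b : ι → S), (∀ i j, i ≤ j → b i ∣ b j) ∧
      span S (range fun k => b k • f k) = M := by
  let π : (ι → R) →ₗ[R] (ι → S) := (Algebra.linearMap R S).compLeft ι
  have hπ : Surjective π := hS.comp_left
  have hspan_π : ∀ X : Set (ι → R),
      (span S (π '' X)).restrictScalars R = (span R X).map π := fun X => by
    rw [restrictScalars_span R S hS, map_span]
  obtain ⟨e, a, ha, hspan⟩ :=
    ((M.restrictScalars R).comap π).exists_basis_dvd_chain_span_smul_eq (Pi.basisFun R ι)
  obtain ⟨f, hf⟩ := (Pi.basisFun S ι).exists_coe_eq_of_span_eq_top (v := π ∘ e) <|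
    restrictScalars_injective R S _ <| by
      rw [range_comp, hspan_π, e.span_eq, map_top, LinearMap.range_eq_top.2 hπ,
        restrictScalars_top]
  refine ⟨f, fun k => algebraMap R S (a k), fun i j hij => map_dvd _ (ha i j hij),
    restrictScalars_injective R S _ ?_⟩
  have hπa : (fun k => algebraMap R S (a k) • f k) = π ∘ fun k => a k • e k := by
    funext k
    simp [hf, algebraMap_smul]
  rw [hπa, range_comp, hspan_π, hspan, map_comap_eq_of_surjective hπ]

theorem span_range_comp_eq_top_of_ker_le {ι' P Q : Type*} [AddCommGroup P] [Module R P]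
    [AddCommGroup Q] [Module R Q] {ℓ : P →ₗ[R] F} {κ : P →ₗ[R] Q} (hκ : Surjective κ)
    (hker : LinearMap.ker ℓ ≤ LinearMap.ker κ) {z : ι' → P}
    (hz : span R (range (ℓ ∘ z)) = LinearMap.range ℓ) : span R (range (κ ∘ z)) = ⊤ := by
  have hz_sup : span R (range z) ⊔ LinearMap.ker ℓ = ⊤ := by
    rw [← comap_map_eq, map_span, ← range_comp, hz]
    exact eq_top_iff.2 fun y _ => LinearMap.mem_range_self ℓ y
  rw [range_comp, ← map_span, ← LinearMap.range_eq_top.2 hκ, LinearMap.range_eq_map,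
    ← hz_sup, Submodule.map_sup, LinearMap.le_ker_iff_map.1 hker, sup_bot_eq]

theorem le_of_span_range_pi_eq_top {K : Type*} [Field K] [Algebra R K] {m r : ℕ}
    {w : Fin r → Fin m → K} (hw : span R (range w) = ⊤) : m ≤ r := by
  have hwK : span K (range w) = ⊤ :=
    eq_top_iff.2 fun _ _ => span_le_restrictScalars R K _ (hw ▸ mem_top)
  have hcard := finrank_range_le_card (R := K) w
  rwa [Set.finrank, hwK, finrank_top, Module.finrank_fin_fun, Fintype.card_fin] at hcard

theorem le_of_span_range_eq_span_range_smul [Fintype ι] {v : ι → F} (hv : LinearIndependent R v)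
    (b : ι → R) {m r : ℕ} {g : Fin r → F}
    (hg : span R (range g) = span R (range fun k => b k • v k)) {j : Fin m → ι}
    (hj : Injective j) {c : R} (hc : c ≠ 0) (hbc : ∀ l, b (j l) ∣ c) : m ≤ r := by
  obtain ⟨I, hI, hcI⟩ := Ideal.exists_le_maximal (LinearMap.ker (LinearMap.mulRight R c))
    (by simpa [eq_top_iff, SetLike.le_def] using ⟨1, by simpa using hc⟩)
  let : Field (R ⧸ I) := Ideal.Quotient.field I
  let ℓ := Fintype.linearCombination R (fun k => b k • v k)
  let κ : (ι → R) →ₗ[R] (Fin m → R ⧸ I) :=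
    (Ideal.Quotient.mkₐ R I).toLinearMap.compLeft (Fin m) ∘ₗ LinearMap.funLeft R R j
  have hκ : Surjective κ :=
    Ideal.Quotient.mk_surjective.comp_left.comp (LinearMap.funLeft_surjective_of_injective _ _ _ hj)
  have hker : LinearMap.ker ℓ ≤ LinearMap.ker κ := by
    intro y hy
    have hyb : ∀ k, y k * b k = 0 := Fintype.linearIndependent_iff.1 hv _ (by
      simpa [ℓ, Fintype.linearCombination_apply, mul_smul] using hy)
    ext l
    obtain ⟨t, ht⟩ := hbc l
    refine Ideal.Quotient.eq_zero_iff_mem.2 (hcI ?_)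
    simp [ht, hyb]
  have hg_range : ∀ t, g t ∈ LinearMap.range ℓ := fun t => by
    rw [Fintype.range_linearCombination, ← hg]
    exact subset_span (mem_range_self t)
  choose z hz using hg_range
  refine le_of_span_range_pi_eq_top (w := κ ∘ z) (span_range_comp_eq_top_of_ker_le hκ hker ?_)
  rw [show ℓ ∘ z = g from funext hz, hg, Fintype.range_linearCombination]

theorem span_range_comp_castLE {m n : ℕ} (h : m ≤ n) {v : Fin n → F}
    (hv : ∀ k : Fin n, m ≤ k → v k = 0) :
    span R (range (v ∘ Fin.castLE h)) = span R (range v) := by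
  refine le_antisymm (span_mono (range_comp_subset_range _ _)) (span_le.2 ?_)
  rintro _ ⟨k, rfl⟩
  by_cases hk : (k : ℕ) < m
  · exact subset_span ⟨⟨k, hk⟩, rfl⟩
  · rw [hv k (not_lt.1 hk)]
    exact zero_mem _

theorem stmt_9_general (d n r : ℕ)
    (M : Submodule (ZMod d) (Fin n → ZMod d))
    (hspan : ∃ g : Fin r → (Fin n → ZMod d),
      Submodule.span (ZMod d) (Set.range g) = M)
    (hmin : ∀ k : ℕ, (∃ g : Fin k → (Fin n → ZMod d),
      Submodule.span (ZMod d) (Set.range g) = M) → r ≤ k) :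
    ∃ (hrn : r ≤ n) (f : Module.Basis (Fin n) (ZMod d) (Fin n → ZMod d))
      (b : Fin r → ZMod d),
      (∀ i j : Fin r, i ≤ j → b i ∣ b j) ∧
      Submodule.span (ZMod d)
        (Set.range fun i : Fin r => b i • f (Fin.castLE hrn i)) = M := by
  obtain ⟨f, b, hb, hM⟩ :=
    M.exists_basis_dvd_chain_span_smul_eq_of_surjective (R := ℤ) ZMod.intCast_surjective
  have hrn : r ≤ n := hmin n ⟨_, hM⟩
  have hb_zero : ∀ k : Fin n, r ≤ k → b k = 0 := by
    intro k hk
    by_contra hbk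
    obtain ⟨g, hg⟩ := hspan
    have hkr : (k : ℕ) + 1 ≤ r :=
      le_of_span_range_eq_span_range_smul f.linearIndependent b (hg.trans hM.symm)
        (Fin.castLE_injective k.isLt) hbk fun l => hb _ _ (Fin.le_def.2 (Nat.lt_succ_iff.1 l.isLt))
    omega
  refine ⟨hrn, f, fun i => b (Fin.castLE hrn i), fun i j hij => hb _ _ (by simpa using hij), ?_⟩
  rw [← hM, ← span_range_comp_castLE hrn (v := fun k => b k • f k) fun k hk => by
    rw [hb_zero k hk, zero_smul]]
  rfl

/-- Simple reduction: every rank-`r` submodule `M` of `(ℤ/dℤ)^n` admits a free basis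
`f` of `(ℤ/dℤ)^n` and elements `b₁ ∣ b₂ ∣ ⋯ ∣ b_r` of `ℤ/dℤ` such that
`(b₁·f₁, …, b_r·f_r)` generates `M`. -/
theorem stmt_9 (d n r : ℕ) (hd : 2 ≤ d) (hn : 1 ≤ n)
    (M : Submodule (ZMod d) (Fin n → ZMod d))
    (hspan : ∃ g : Fin r → (Fin n → ZMod d),
      Submodule.span (ZMod d) (Set.range g) = M)
    (hmin : ∀ k : ℕ, (∃ g : Fin k → (Fin n → ZMod d),
      Submodule.span (ZMod d) (Set.range g) = M) → r ≤ k) :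
    ∃ (hrn : r ≤ n) (f : Module.Basis (Fin n) (ZMod d) (Fin n → ZMod d))
      (b : Fin r → ZMod d),
      (∀ i j : Fin r, i ≤ j → b i ∣ b j) ∧
      Submodule.span (ZMod d)
        (Set.range fun i : Fin r => b i • f (Fin.castLE hrn i)) = M :=
  stmt_9_general d n r M hspan hmin
end

section
/- Any free family (b₁,…,b_r) in (ℤ/dℤ)^n satisfies r ≤ n and can be completed by vectors b_{r+1},…,bₙ to a free basis (b₁,…,bₙ) of (ℤ/dℤ)^n. -/
/-!
Lift `b` to integer vectors `v`. A relation among the `v` that vanishes modulo `d` has all its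
coefficients divisible by `d`; hence the `v` are free over `ℤ` and their span `L` satisfies
`L ∩ dℤⁿ = dL`. Smith normal form gives a basis `E` of `ℤⁿ` such that the `aᵢ • E (f i)` form a
basis of `L`; the equality `L ∩ dℤⁿ = dL` forces every `aᵢ` to be a unit modulo `d`, so the
reductions of the `E (f i)` lie in the span of `b`. Replacing them by the `bᵢ` in the reduced basis
gives `n` vectors spanning `(ℤ/dℤ)ⁿ`, which form a basis since a surjective endomorphism of a
finite free module over a commutative ring is bijective.
-/

open Module Submodule Set

theorem Module.Basis.exists_basis_extend {R M ι κ : Type*} [CommRing R] [Nontrivial R]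
    [AddCommGroup M] [Module R M] [Fintype ι] (e : Basis ι R M) {f : κ → ι}
    (hf : Function.Injective f) (b : κ → M) (he : ∀ k, e (f k) ∈ span R (range b)) :
    ∃ B : Basis ι R M, ∀ k, B (f k) = b k := by
  classical
  set x : ι → M := Function.extend f b e
  have hb : span R (range b) ≤ span R (range x) :=
    span_mono <| range_subset_iff.mpr fun k ↦ ⟨f k, hf.extend_apply b e k⟩
  have hspan : ⊤ ≤ span R (range x) := by
    rw [← e.span_eq, span_le]
    rintro _ ⟨i, rfl⟩
    by_cases hi : ∃ k, f k = i
    · obtain ⟨k, rfl⟩ := hi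
      exact hb (he k)
    · exact subset_span ⟨i, Function.extend_apply' b e i hi⟩
  refine ⟨basisOfTopLeSpanOfCardEqFinrank x hspan (finrank_eq_card_basis e).symm, fun k ↦ ?_⟩
  rw [coe_basisOfTopLeSpanOfCardEqFinrank]
  exact hf.extend_apply b e k

def reduceMod (d : ℕ) (κ : Type*) : (κ → ℤ) →ₗ[ℤ] κ → ZMod d :=
  (Int.castAddHom (ZMod d)).toIntLinearMap.compLeft κ

section reduceMod

variable {d : ℕ} {ι κ : Type*}

@[simp]
theorem reduceMod_apply (z : κ → ℤ) (j : κ) : reduceMod d κ z j = z j := rfl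

theorem reduceMod_smul (c : ℤ) (z : κ → ℤ) :
    reduceMod d κ (c • z) = (c : ZMod d) • reduceMod d κ z := by
  rw [map_zsmul, Int.cast_smul_eq_zsmul]

theorem reduceMod_surjective [NeZero d] : Function.Surjective (reduceMod d κ) :=
  fun y ↦ ⟨fun j ↦ (y j).val, funext fun j ↦ by simp⟩

theorem reduceMod_mem_span {S : Set (κ → ℤ)} {z : κ → ℤ} (hz : z ∈ span ℤ S) :
    reduceMod d κ z ∈ span (ZMod d) (reduceMod d κ '' S) := by
  have := mem_map_of_mem (f := reduceMod d κ) hz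
  rw [map_span] at this
  exact span_le_restrictScalars ℤ (ZMod d) _ this

theorem Module.Basis.exists_basis_reduceMod_eq [Fintype κ] [NeZero d] [Nontrivial (ZMod d)]
    (E : Basis κ ℤ (κ → ℤ)) : ∃ e : Basis κ (ZMod d) (κ → ZMod d), ⇑e = reduceMod d κ ∘ E := by
  have hspan : ⊤ ≤ span (ZMod d) (range (reduceMod d κ ∘ E)) := by
    rintro y -
    obtain ⟨z, rfl⟩ := reduceMod_surjective y
    rw [range_comp]
    exact reduceMod_mem_span (E.span_eq ▸ mem_top)
  exact ⟨basisOfTopLeSpanOfCardEqFinrank _ hspan (finrank_fintype_fun_eq_card _).symm,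
    coe_basisOfTopLeSpanOfCardEqFinrank _ _ _⟩

variable [Fintype ι] {b : ι → κ → ZMod d} {v : ι → κ → ℤ}

theorem dvd_of_reduceMod_sum_eq_zero (hb : LinearIndependent (ZMod d) b)
    (hv : ∀ i, reduceMod d κ (v i) = b i) {c : ι → ℤ}
    (hc : reduceMod d κ (∑ i, c i • v i) = 0) (i : ι) : (d : ℤ) ∣ c i := by
  simp only [map_sum, reduceMod_smul, hv] at hc
  exact (ZMod.intCast_zmod_eq_zero_iff_dvd _ _).mp (Fintype.linearIndependent_iff.mp hb _ hc i)

/-- A relation among the lifts has all its coefficients divisible by every power of `d`. -/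
theorem linearIndependent_of_reduceMod (hd : 1 < d) (hb : LinearIndependent (ZMod d) b)
    (hv : ∀ i, reduceMod d κ (v i) = b i) : LinearIndependent ℤ v := by
  have hd₀ : (d : ℤ) ≠ 0 := by exact_mod_cast (by omega : d ≠ 0)
  have hpow : ∀ k : ℕ, ∀ c : ι → ℤ, ∑ i, c i • v i = 0 → ∀ i, (d : ℤ) ^ k ∣ c i := by
    intro k
    induction k with
    | zero => simp
    | succ k ih =>
      intro c hc i
      choose c' hc' using dvd_of_reduceMod_sum_eq_zero hb hv (c := c) (by rw [hc, map_zero])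
      have hc'0 : ∑ i, c' i • v i = 0 := by
        refine (smul_right_injective _ hd₀).eq_iff.mp ?_
        simp only [smul_zero, Finset.smul_sum, smul_smul, ← hc', hc]
      rw [hc', pow_succ']
      exact mul_dvd_mul_left _ (ih c' hc'0 i)
  refine Fintype.linearIndependent_iff.mpr fun c hc i ↦
    Int.eq_zero_of_dvd_of_natAbs_lt_natAbs (hpow (c i).natAbs c hc i) ?_
  rw [Int.natAbs_pow, Int.natAbs_natCast]
  exact Nat.lt_pow_self hd

theorem exists_eq_smul_of_reduceMod_eq_zero (hb : LinearIndependent (ZMod d) b)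
    (hv : ∀ i, reduceMod d κ (v i) = b i) {z : κ → ℤ} (hz : z ∈ span ℤ (range v))
    (hz₀ : reduceMod d κ z = 0) : ∃ w ∈ span ℤ (range v), z = (d : ℤ) • w := by
  obtain ⟨c, rfl⟩ := (mem_span_range_iff_exists_fun ℤ).mp hz
  choose c' hc' using dvd_of_reduceMod_sum_eq_zero hb hv hz₀
  refine ⟨∑ i, c' i • v i, sum_mem fun i _ ↦ smul_mem _ _ (subset_span ⟨i, rfl⟩), ?_⟩
  simp only [Finset.smul_sum, smul_smul, ← hc']

end reduceMod

section smith

variable {d m : ℕ} {ι κ : Type*} [Fintype ι] {b : ι → κ → ZMod d} {v : ι → κ → ℤ}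

theorem isUnit_smithNormalForm_coeff [NeZero d] (hb : LinearIndependent (ZMod d) b)
    (hv : ∀ i, reduceMod d κ (v i) = b i) (snf : Basis.SmithNormalForm (span ℤ (range v)) κ m)
    (k : Fin m) : IsUnit (snf.a k : ZMod d) := by
  refine isUnit_iff_mem_nonZeroDivisors_of_finite.mpr
    (mem_nonZeroDivisors_iff_right.mpr fun x hx ↦ ?_)
  obtain ⟨x, rfl⟩ := ZMod.intCast_surjective x
  have h₀ : reduceMod d κ (x • (snf.bN k : κ → ℤ)) = 0 := by
    rw [reduceMod_smul, snf.snf, reduceMod_smul, smul_smul, hx, zero_smul]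
  obtain ⟨w, hw, hxw⟩ :=
    exists_eq_smul_of_reduceMod_eq_zero hb hv (smul_mem _ _ (snf.bN k).2) h₀
  have hrepr := congrArg (fun y ↦ snf.bN.repr y k)
    (show x • snf.bN k = (d : ℤ) • ⟨w, hw⟩ from Subtype.ext hxw)
  simp only [map_smul, Basis.repr_self, Finsupp.smul_apply, Finsupp.single_eq_same, smul_eq_mul,
    mul_one] at hrepr
  exact (ZMod.intCast_zmod_eq_zero_iff_dvd _ _).mpr ⟨_, hrepr⟩

theorem exists_basis_embedding_mem_span [Fintype κ] (hd : 1 < d)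
    (hb : LinearIndependent (ZMod d) b) :
    ∃ e : Basis κ (ZMod d) (κ → ZMod d), ∃ f : ι → κ,
      Function.Injective f ∧ ∀ i, e (f i) ∈ span (ZMod d) (range b) := by
  have : NeZero d := ⟨by omega⟩
  have : Fact (1 < d) := ⟨hd⟩
  choose v hv using fun i ↦ reduceMod_surjective (κ := κ) (b i)
  obtain ⟨m, snf⟩ := (span ℤ (range v)).smithNormalForm (Pi.basisFun ℤ κ)
  have hm : Fintype.card ι = m := by
    rw [← finrank_span_eq_card (linearIndependent_of_reduceMod hd hb hv),
      finrank_eq_card_basis snf.bN, Fintype.card_fin]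
  obtain ⟨e, he⟩ := snf.bM.exists_basis_reduceMod_eq (d := d)
  let σ := Fintype.equivFinOfCardEq hm
  refine ⟨e, snf.f ∘ σ, snf.f.injective.comp σ.injective, fun i ↦ ?_⟩
  have hbN := reduceMod_mem_span (d := d) (snf.bN (σ i)).2
  rw [← range_comp, show reduceMod d κ ∘ v = b from funext hv, snf.snf, reduceMod_smul,
    smul_mem_iff_of_isUnit _ (isUnit_smithNormalForm_coeff hb hv snf _)] at hbN
  simpa [he] using hbN

end smith

/-- Incomplete basis theorem: any free family of `r` vectors in `(ℤ/dℤ)^n` satisfies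
`r ≤ n` and extends to a free basis of `(ℤ/dℤ)^n`. -/
theorem stmt_10 (d n r : ℕ) (hd : 2 ≤ d) (b : Fin r → (Fin n → ZMod d))
    (hfree : LinearIndependent (ZMod d) b) :
    ∃ h : r ≤ n, ∃ B : Module.Basis (Fin n) (ZMod d) (Fin n → ZMod d),
      ∀ i : Fin r, B (Fin.castLE h i) = b i := by
  have : Fact (1 < d) := ⟨hd⟩
  obtain ⟨e, f, hf, he⟩ := exists_basis_embedding_mem_span hd hfree
  have hrn : r ≤ n := by simpa using Fintype.card_le_of_injective f hf
  obtain ⟨σ, hσ⟩ :=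
    Equiv.Perm.exists_extending_pair (Fin.castLE hrn) f (Fin.castLE_injective hrn) hf
  obtain ⟨B, hB⟩ := (e.reindex σ.symm).exists_basis_extend (Fin.castLE_injective hrn) b
    fun i ↦ by simpa [hσ] using he i
  exact ⟨hrn, B, hB⟩
end

section
/- In a module with basis given by a diagonal matrix, any two minimal bases of a submodule M of (ℤ/dℤ)^n have the same multiset of diagonal invariants: if diag(b₁,…,b_r) and diag(c₁,…,c_r) (with respect to possibly different free bases of (ℤ/dℤ)^n, and with bᵢ ∣ bⱼ, cᵢ ∣ cⱼ for i < j) are both basis matrices for M, then for each i the elements bᵢ and cᵢ have the same additive order in ℤ/dℤ. -/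
/-!
For `m : ℕ`, the image of `M = span {bᵢ • fᵢ}` under multiplication by `m` is
`span {(m • bᵢ) • fᵢ}`, which has `∏ᵢ ord(m • bᵢ)` elements because the `fᵢ` are independent.
Hence `∏ᵢ ord(m • bᵢ) = ∏ᵢ ord(m • cᵢ)` for every `m`. Along the chains the orders decrease
under divisibility, so `m = ord(cᵢ)` kills every `cⱼ` with `j ≥ i`; if the orders agree below
`i`, comparing the two products termwise forces `ord(bᵢ) ∣ ord(cᵢ)`. By symmetry and induction
on `i` the orders agree everywhere.
-/

open Submodule

section LinearAlgebra

variable {R M ι : Type*} [Semiring R] [AddCommMonoid M] [Module R M]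

theorem Submodule.map_nsmul_span_range_smul (m : ℕ) (b : ι → R) (v : ι → M) :
    (span R (Set.range fun i => b i • v i)).map (m • LinearMap.id) =
      span R (Set.range fun i => (m • b i) • v i) := by
  rw [map_span, ← Set.range_comp]
  congr 2 with i
  rw [Function.comp_apply, LinearMap.smul_apply, LinearMap.id_apply, smul_assoc]

variable [Fintype ι]

theorem Submodule.card_pi_univ {φ : ι → Type*} [∀ i, AddCommMonoid (φ i)]
    [∀ i, Module R (φ i)] (p : ∀ i, Submodule R (φ i)) :
    Nat.card (pi Set.univ p) = ∏ i, Nat.card (p i) := by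
  rw [← Nat.card_pi]
  exact Nat.card_congr (Equiv.Set.univPi fun i => (p i : Set (φ i)))

theorem Submodule.span_range_smul_eq_map_pi (b : ι → R) (v : ι → M) :
    span R (Set.range fun i => b i • v i) =
      (pi Set.univ fun i => R ∙ b i).map (Fintype.linearCombination R v) := by
  classical
  rw [span_range_eq_iSup, ← iSup_map_single, map_iSup]
  refine iSup_congr fun i => ?_
  rw [← map_comp, map_span, Set.image_singleton]
  simp

theorem LinearIndependent.card_span_range_smul {v : ι → M} (hv : LinearIndependent R v)
    (b : ι → R) :
    Nat.card (span R (Set.range fun i => b i • v i)) = ∏ i, Nat.card (R ∙ b i) := by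
  rw [span_range_smul_eq_map_pi, ← card_pi_univ,
    ← Nat.card_congr (equivMapOfInjective _ hv.fintypeLinearCombination_injective _).toEquiv]

end LinearAlgebra

theorem ZMod.card_span_singleton {n : ℕ} {G : Type*} [AddCommGroup G] [Module (ZMod n) G]
    (x : G) : Nat.card (ZMod n ∙ x) = addOrderOf x := by
  rw [← Nat.card_zmultiples, ← span_singleton_toAddSubgroup_eq_zmultiples,
    ← restrictScalars_span ℤ (ZMod n) ZMod.intCast_surjective]
  rfl

theorem LinearIndependent.card_map_nsmul_span_range_smul {n : ℕ} {G ι : Type*} [Fintype ι]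
    [AddCommGroup G] [Module (ZMod n) G] {v : ι → G} (hv : LinearIndependent (ZMod n) v)
    (b : ι → ZMod n) (m : ℕ) :
    Nat.card ((span (ZMod n) (Set.range fun i => b i • v i)).map (m • LinearMap.id)) =
      ∏ i, addOrderOf (m • b i) := by
  rw [map_nsmul_span_range_smul, hv.card_span_range_smul]
  simp_rw [ZMod.card_span_singleton]

theorem addOrderOf_dvd_of_dvd {R : Type*} [NonUnitalSemiring R] {a b : R} (h : a ∣ b) :
    addOrderOf b ∣ addOrderOf a := by
  obtain ⟨k, rfl⟩ := h
  rw [addOrderOf_dvd_iff_nsmul_eq_zero, ← smul_mul_assoc, addOrderOf_nsmul_eq_zero, zero_mul]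

section OrderSequences

variable {ι G : Type*} [Fintype ι] [LinearOrder ι] [AddLeftCancelMonoid G] [Finite G]
  {x y : ι → G}

theorem addOrderOf_dvd_of_prod_addOrderOf_nsmul_eq
    (hy : ∀ i j, i ≤ j → addOrderOf (y j) ∣ addOrderOf (y i))
    (H : ∀ m : ℕ, ∏ j, addOrderOf (m • x j) = ∏ j, addOrderOf (m • y j))
    {i : ι} (hlt : ∀ j < i, addOrderOf (x j) = addOrderOf (y j)) :
    addOrderOf (x i) ∣ addOrderOf (y i) := by
  set m := addOrderOf (y i)
  by_contra hdvd
  have hle : ∀ j, addOrderOf (m • y j) ≤ addOrderOf (m • x j) := by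
    intro j
    rcases lt_or_ge j i with hj | hj
    · rw [addOrderOf_nsmul, addOrderOf_nsmul, hlt j hj]
    · rw [AddMonoid.addOrderOf_eq_one_iff.2 (addOrderOf_dvd_iff_nsmul_eq_zero.1 (hy i j hj))]
      exact addOrderOf_pos _
  have hlt_i : addOrderOf (m • y i) < addOrderOf (m • x i) := by
    rw [addOrderOf_nsmul_eq_zero, addOrderOf_zero, Nat.one_lt_iff_ne_zero_and_ne_one]
    exact ⟨(addOrderOf_pos _).ne', fun h => hdvd (addOrderOf_dvd_iff_nsmul_eq_zero.2
      (AddMonoid.addOrderOf_eq_one_iff.1 h))⟩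
  exact (H m).not_gt <| Finset.prod_lt_prod (fun j _ => addOrderOf_pos _) (fun j _ => hle j)
    ⟨i, Finset.mem_univ i, hlt_i⟩

theorem addOrderOf_eq_of_prod_addOrderOf_nsmul_eq
    (hx : ∀ i j, i ≤ j → addOrderOf (x j) ∣ addOrderOf (x i))
    (hy : ∀ i j, i ≤ j → addOrderOf (y j) ∣ addOrderOf (y i))
    (H : ∀ m : ℕ, ∏ j, addOrderOf (m • x j) = ∏ j, addOrderOf (m • y j)) (i : ι) :
    addOrderOf (x i) = addOrderOf (y i) := by
  induction i using WellFoundedLT.induction with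
  | _ i ih =>
    exact Nat.dvd_antisymm (addOrderOf_dvd_of_prod_addOrderOf_nsmul_eq hy H ih)
      (addOrderOf_dvd_of_prod_addOrderOf_nsmul_eq hx (fun m => (H m).symm)
        fun j hj => (ih j hj).symm)

end OrderSequences

/-- Uniqueness of diagonal invariants: if `diag(b₁,…,b_r)` and `diag(c₁,…,c_r)` are
diagonal basis matrices for the same submodule `M` (with respect to possibly different
free bases of `(ℤ/dℤ)^n`, divisibility chains `bᵢ ∣ bⱼ`, `cᵢ ∣ cⱼ` for `i ≤ j`),
then each `bᵢ` has the same additive order as `cᵢ`. -/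
theorem stmt_11 (d n r : ℕ) (hd : 2 ≤ d) (hrn : r ≤ n)
    (M : Submodule (ZMod d) (Fin n → ZMod d))
    (f g : Module.Basis (Fin n) (ZMod d) (Fin n → ZMod d))
    (b c : Fin r → ZMod d)
    (hb : ∀ i j : Fin r, i ≤ j → b i ∣ b j)
    (hc : ∀ i j : Fin r, i ≤ j → c i ∣ c j)
    (hbM : Submodule.span (ZMod d)
      (Set.range fun i : Fin r => b i • f (Fin.castLE hrn i)) = M)
    (hcM : Submodule.span (ZMod d)
      (Set.range fun i : Fin r => c i • g (Fin.castLE hrn i)) = M) :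
    ∀ i : Fin r, addOrderOf (b i) = addOrderOf (c i) := by
  have : NeZero d := ⟨by omega⟩
  have hv (e : Module.Basis (Fin n) (ZMod d) (Fin n → ZMod d)) :
      LinearIndependent (ZMod d) fun i : Fin r => e (Fin.castLE hrn i) :=
    e.linearIndependent.comp _ (Fin.castLE_injective hrn)
  have hcard (m : ℕ) : ∏ j, addOrderOf (m • b j) = ∏ j, addOrderOf (m • c j) := by
    rw [← (hv f).card_map_nsmul_span_range_smul, ← (hv g).card_map_nsmul_span_range_smul,
      hbM, hcM]
  exact addOrderOf_eq_of_prod_addOrderOf_nsmul_eq (fun i j h => addOrderOf_dvd_of_dvd (hb i j h))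
    (fun i j h => addOrderOf_dvd_of_dvd (hc i j h)) hcard
end

section
/- If two submodules M and N of (ℤ/dℤ)^n have the same characteristic sequence (i.e., they admit diagonal basis matrices with diagonal entries of the same orders with respect to suitable free bases), then there exists an automorphism of (ℤ/dℤ)^n mapping M onto N. -/
/-!
In `ℤ/dℤ` the additive order of `x` is `d / gcd(d, x)`, and `x` generates the same ideal as
`gcd(d, x)`; so elements of equal order divide each other. Hence the change of basis `f ↦ g`
sends each generator `bᵢ • fᵢ` of `M` to `bᵢ • gᵢ`, which differs from the generator `cᵢ • gᵢ`
of `N` by a two-sided divisibility, and the two spans agree.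
-/

namespace ZMod

variable {d : ℕ} [NeZero d]

theorem dvd_natCast_gcd_val (x : ZMod d) : x ∣ ((d.gcd x.val : ℕ) : ZMod d) := by
  have hbezout := congrArg (fun z : ℤ => (z : ZMod d)) (Nat.gcd_eq_gcd_ab d x.val)
  push_cast at hbezout
  rw [natCast_zmod_val, natCast_self, zero_mul, zero_add] at hbezout
  exact ⟨_, hbezout⟩

theorem natCast_gcd_val_dvd (x : ZMod d) : ((d.gcd x.val : ℕ) : ZMod d) ∣ x := by
  simpa only [natCast_zmod_val] using Nat.cast_dvd_cast (α := ZMod d) (Nat.gcd_dvd_right d x.val)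

theorem addOrderOf_eq_div_gcd_val (x : ZMod d) : addOrderOf x = d / d.gcd x.val := by
  simpa only [natCast_zmod_val] using addOrderOf_coe x.val (NeZero.ne d)

theorem dvd_of_addOrderOf_eq {x y : ZMod d} (h : addOrderOf x = addOrderOf y) : x ∣ y := by
  rw [addOrderOf_eq_div_gcd_val, addOrderOf_eq_div_gcd_val,
    Nat.div_eq_iff_eq_of_dvd_dvd (NeZero.ne d) (Nat.gcd_dvd_left _ _)
      (Nat.gcd_dvd_left _ _)] at h
  exact (dvd_natCast_gcd_val x).trans (h ▸ natCast_gcd_val_dvd y)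

end ZMod

theorem Submodule.span_range_smul_le_of_dvd {R M ι : Type*} [CommSemiring R] [AddCommMonoid M]
    [Module R M] {a a' : ι → R} (v : ι → M) (h : ∀ i, a i ∣ a' i) :
    span R (Set.range fun i => a' i • v i) ≤ span R (Set.range fun i => a i • v i) := by
  rw [span_le]
  rintro _ ⟨i, rfl⟩
  obtain ⟨u, hu⟩ := h i
  change a' i • v i ∈ span R _
  rw [hu, mul_comm, mul_smul]
  exact smul_mem _ _ (subset_span ⟨i, rfl⟩)

theorem stmt_12_general (d n r : ℕ) (hd : 2 ≤ d) (hrn : r ≤ n)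
    (M N : Submodule (ZMod d) (Fin n → ZMod d))
    (f g : Module.Basis (Fin n) (ZMod d) (Fin n → ZMod d))
    (b c : Fin r → ZMod d)
    (hbM : Submodule.span (ZMod d)
      (Set.range fun i : Fin r => b i • f (Fin.castLE hrn i)) = M)
    (hcN : Submodule.span (ZMod d)
      (Set.range fun i : Fin r => c i • g (Fin.castLE hrn i)) = N)
    (horder : ∀ i : Fin r, addOrderOf (b i) = addOrderOf (c i)) :
    ∃ e : (Fin n → ZMod d) ≃ₗ[ZMod d] (Fin n → ZMod d),
      Submodule.map (e : (Fin n → ZMod d) →ₗ[ZMod d] (Fin n → ZMod d)) M = N := by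
  have : NeZero d := ⟨by omega⟩
  refine ⟨f.equiv g (Equiv.refl _), ?_⟩
  have hmap : Submodule.map (f.equiv g (Equiv.refl _) : _ →ₗ[ZMod d] _) M =
      Submodule.span (ZMod d) (Set.range fun i : Fin r => b i • g (Fin.castLE hrn i)) := by
    rw [← hbM, Submodule.map_span, ← Set.range_comp]
    congr 2
    funext i
    simp
  rw [hmap, ← hcN]
  exact le_antisymm
    (Submodule.span_range_smul_le_of_dvd _ fun i => ZMod.dvd_of_addOrderOf_eq (horder i).symm)
    (Submodule.span_range_smul_le_of_dvd _ fun i => ZMod.dvd_of_addOrderOf_eq (horder i))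

/-- If two submodules `M` and `N` of `(ℤ/dℤ)^n` have the same characteristic sequence
(they admit diagonal basis matrices whose diagonal entries have the same additive
orders, with respect to suitable free bases), then some automorphism of `(ℤ/dℤ)^n`
maps `M` onto `N`. -/
theorem stmt_12 (d n r : ℕ) (hd : 2 ≤ d) (hrn : r ≤ n)
    (M N : Submodule (ZMod d) (Fin n → ZMod d))
    (f g : Module.Basis (Fin n) (ZMod d) (Fin n → ZMod d))
    (b c : Fin r → ZMod d)
    (hb : ∀ i j : Fin r, i ≤ j → b i ∣ b j)
    (hc : ∀ i j : Fin r, i ≤ j → c i ∣ c j)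
    (hbM : Submodule.span (ZMod d)
      (Set.range fun i : Fin r => b i • f (Fin.castLE hrn i)) = M)
    (hcN : Submodule.span (ZMod d)
      (Set.range fun i : Fin r => c i • g (Fin.castLE hrn i)) = N)
    (horder : ∀ i : Fin r, addOrderOf (b i) = addOrderOf (c i)) :
    ∃ e : (Fin n → ZMod d) ≃ₗ[ZMod d] (Fin n → ZMod d),
      Submodule.map (e : (Fin n → ZMod d) →ₗ[ZMod d] (Fin n → ZMod d)) M = N :=
  stmt_12_general d n r hd hrn M N f g b c hbM hcN horder
end

section
/- Let d = p^s be a prime power, a, x, y, z ∈ ℤ/dℤ with a ≠ 0 and x a multiple of a, and let m be the 4×2 matrix with columns (a,0,0,0)ᵀ and (x,y,z,0)ᵀ. There exists a symplectic 4×4 matrix S over ℤ/dℤ such that S·m is upper-triangular if and only if z is a multiple of y. -/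
/-- The standard `4×4` symplectic form matrix `J₂ = diag(J, J)` with
`J = [[0,1],[-1,0]]`. -/
def J2 (d : ℕ) : Matrix (Fin 4) (Fin 4) (ZMod d) :=
  !![0, 1, 0, 0; -1, 0, 0, 0; 0, 0, 0, 1; 0, 0, -1, 0]

set_option maxHeartbeats 1000000 in
lemma dvd_of_not_isUnit' (p s : ℕ) (hp : p.Prime)
    (x : ZMod (p ^ s)) (h : ¬ IsUnit x) : (p : ZMod (p ^ s)) ∣ x := by
  haveI : NeZero (p ^ s) := ⟨pow_ne_zero _ hp.pos.ne'⟩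
  have hx : ((x.val : ℕ) : ZMod (p ^ s)) = x := ZMod.natCast_rightInverse x
  rw [← hx] at h
  rw [ZMod.isUnit_iff_coprime] at h
  have hg : Nat.gcd x.val (p ^ s) ∣ p ^ s := Nat.gcd_dvd_right _ _
  obtain ⟨m, hm, hgm⟩ := (Nat.dvd_prime_pow hp).mp hg
  have hm0 : m ≠ 0 := by
    rintro rfl
    exact h (by simpa [Nat.Coprime] using hgm)
  have hpd : p ∣ x.val := by
    calc p ∣ p ^ m := dvd_pow_self p hm0
    _ = Nat.gcd x.val (p ^ s) := hgm.symm
    _ ∣ x.val := Nat.gcd_dvd_left _ _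
  rw [← hx]
  exact_mod_cast Nat.cast_dvd_cast hpd


set_option maxHeartbeats 1000000 in
/-- Criterion: with `d = p^s`, `a ≠ 0`, `x` a multiple of `a`, the `4×2` matrix with
columns `(a,0,0,0)ᵀ` and `(x,y,z,0)ᵀ` can be brought to upper-triangular form by a
symplectic matrix iff `z` is a multiple of `y`. -/
theorem stmt_15 (p s : ℕ) (hp : p.Prime) (hs : 1 ≤ s)
    (a x y z : ZMod (p ^ s)) (ha : a ≠ 0) (hx : ∃ c, x = a * c) :
    (∃ S : Matrix (Fin 4) (Fin 4) (ZMod (p ^ s)),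
        S.transpose * J2 (p ^ s) * S = J2 (p ^ s) ∧
        ∀ i : Fin 4, ∀ j : Fin 2, (j : ℕ) < (i : ℕ) →
          (S * Matrix.of ![![a, x], ![0, y], ![0, z], ![0, 0]]) i j = 0) ↔
      ∃ c, z = y * c := by

  obtain ⟨c₁, rfl⟩ := hx
  constructor
  · rintro ⟨S, hS, hz⟩
    have e20 : S 2 0 * a = 0 := by
      have := hz 2 0 (by decide)
      simpa [Matrix.mul_apply, Fin.sum_univ_four, Matrix.vecHead, Matrix.vecTail] using this
    have e30 : S 3 0 * a = 0 := by
      have := hz 3 0 (by decide)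
      simpa [Matrix.mul_apply, Fin.sum_univ_four, Matrix.vecHead, Matrix.vecTail] using this
    have e21 : S 2 0 * (a * c₁) + S 2 1 * y + S 2 2 * z = 0 := by
      have := hz 2 1 (by decide)
      simpa [Matrix.mul_apply, Fin.sum_univ_four, Matrix.vecHead, Matrix.vecTail] using this
    have e31 : S 3 0 * (a * c₁) + S 3 1 * y + S 3 2 * z = 0 := by
      have := hz 3 1 (by decide)
      simpa [Matrix.mul_apply, Fin.sum_univ_four, Matrix.vecHead, Matrix.vecTail] using this
    by_cases h22 : IsUnit (S 2 2)
    · obtain ⟨v, hv⟩ := h22.exists_left_inv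
      exact ⟨-(v * S 2 1), by linear_combination v * e21 - v * c₁ * e20 - z * hv⟩
    by_cases h32 : IsUnit (S 3 2)
    · obtain ⟨v, hv⟩ := h32.exists_left_inv
      exact ⟨-(v * S 3 1), by linear_combination v * e31 - v * c₁ * e30 - z * hv⟩
    exfalso
    have h20 : ¬ IsUnit (S 2 0) := by
      intro hu
      obtain ⟨v, hv⟩ := hu.exists_left_inv
      exact ha (by linear_combination v * e20 - a * hv)
    have h30 : ¬ IsUnit (S 3 0) := by
      intro hu
      obtain ⟨v, hv⟩ := hu.exists_left_inv
      exact ha (by linear_combination v * e30 - a * hv)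
    obtain ⟨t1, ht1⟩ := dvd_of_not_isUnit' p s hp _ h20
    obtain ⟨t2, ht2⟩ := dvd_of_not_isUnit' p s hp _ h30
    obtain ⟨t3, ht3⟩ := dvd_of_not_isUnit' p s hp _ h22
    obtain ⟨t4, ht4⟩ := dvd_of_not_isUnit' p s hp _ h32
    -- row form of symplectic condition
    have hJJ : J2 (p ^ s) * J2 (p ^ s) = -1 := by
      ext i j
      fin_cases i <;> fin_cases j <;>
        simp [J2, Matrix.mul_apply, Fin.sum_univ_four, Matrix.vecHead, Matrix.vecTail,
          Matrix.one_apply]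
    have hB : (-(J2 (p ^ s)) * S.transpose * J2 (p ^ s)) * S = 1 := by
      calc (-(J2 (p ^ s)) * S.transpose * J2 (p ^ s)) * S
          = -(J2 (p ^ s) * (S.transpose * J2 (p ^ s) * S)) := by
            simp only [Matrix.neg_mul, Matrix.mul_assoc]
        _ = -(J2 (p ^ s) * J2 (p ^ s)) := by rw [hS]
        _ = 1 := by rw [hJJ]; simp
    have hB2 : S * ((-(J2 (p ^ s))) * S.transpose * J2 (p ^ s)) = 1 :=
      mul_eq_one_comm.mp hB
    have h3 : S * ((-(J2 (p ^ s))) * S.transpose * J2 (p ^ s)) * J2 (p ^ s) = J2 (p ^ s) := by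
      rw [hB2, Matrix.one_mul]
    have hrow : S * (J2 (p ^ s) * S.transpose) = J2 (p ^ s) := by
      simpa [Matrix.mul_assoc, hJJ, Matrix.mul_neg, Matrix.neg_mul, neg_neg] using h3
    have hent := congrFun (congrFun hrow 2) 3
    simp [J2, Matrix.mul_apply, Fin.sum_univ_four, Matrix.vecHead, Matrix.vecTail,
      Matrix.transpose_apply, Matrix.vecMul, dotProduct] at hent
    have hdvd1 : (1 : ZMod (p ^ s)) =
        (p : ZMod (p ^ s)) * (t1 * S 3 1 - S 2 1 * t2 + t3 * S 3 3 - S 2 3 * t4) := by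
      linear_combination -hent + S 3 1 * ht1 - S 2 1 * ht2 + S 3 3 * ht3 - S 2 3 * ht4
    have hu : IsUnit ((p : ZMod (p ^ s))) := isUnit_of_dvd_one ⟨_, hdvd1⟩
    have hu2 : IsUnit ((0 : ZMod (p ^ s))) := by
      have := hu.pow s
      rwa [← Nat.cast_pow, ZMod.natCast_self] at this
    haveI : Fact (1 < p ^ s) := ⟨Nat.one_lt_pow (by omega) hp.one_lt⟩
    exact not_isUnit_zero hu2
  · rintro ⟨c, hc⟩
    refine ⟨!![1,0,0,-c; 0,1,0,0; 0,-c,1,0; 0,0,0,1], ?_, ?_⟩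
    · have hT : (!![1,0,0,-c; 0,1,0,0; 0,-c,1,0; 0,0,0,1] :
          Matrix (Fin 4) (Fin 4) (ZMod (p ^ s))).transpose
          = !![1,0,0,0; 0,1,-c,0; 0,0,1,0; -c,0,0,1] := by
        ext i j; fin_cases i <;> fin_cases j <;> rfl
      rw [hT]
      ext i j
      fin_cases i <;> fin_cases j <;>
        simp [J2, Matrix.mul_apply, Fin.sum_univ_four, Matrix.vecHead, Matrix.vecTail] <;> ring
    · intro i j hij
      fin_cases i <;> fin_cases j <;>
        simp [Matrix.mul_apply, Fin.sum_univ_four, Matrix.vecHead, Matrix.vecTail, hc]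
          at hij ⊢ <;> ring
end

section
/- Let d = p^s be a prime power and M a submodule of (ℤ/dℤ)^{2n}. M is symplectic (i.e., M ∩ M^ω = {0}) if and only if M is nearly symplectic and M + M^ω = (ℤ/dℤ)^{2n}. In that case, M is a free submodule of even rank. -/
def Jmat (d n : ℕ) : Matrix (Fin (2 * n)) (Fin (2 * n)) (ZMod d) :=
  Matrix.of fun i j =>
    if i.val % 2 = 0 ∧ j.val = i.val + 1 then 1
    else if j.val % 2 = 0 ∧ i.val = j.val + 1 then -1 else 0

/-- The standard symplectic form `ω` on `(ℤ/dℤ)^{2n}`. -/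
def sympl (d n : ℕ) (x y : Fin (2 * n) → ZMod d) : ZMod d :=
  dotProduct x ((Jmat d n).mulVec y)

/-- The symplectic orthogonal `M^ω` of a submodule `M` of `(ℤ/dℤ)^{2n}`. -/
def symplOrth (d n : ℕ) (M : Submodule (ZMod d) (Fin (2 * n) → ZMod d)) :
    Submodule (ZMod d) (Fin (2 * n) → ZMod d) where
  carrier := {x | ∀ y ∈ M, sympl d n x y = 0}
  zero_mem' := by
    intro y hy
    simp [sympl, zero_dotProduct]
  add_mem' := by
    intro a b ha hb y hy
    simp only [sympl, add_dotProduct, Set.mem_setOf_eq] at *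
    rw [ha y hy, hb y hy, add_zero]
  smul_mem' := by
    intro c a ha y hy
    simp only [sympl, smul_dotProduct, Set.mem_setOf_eq] at *
    rw [ha y hy, smul_zero]

/-- `M` is nearly symplectic: there is a symplectic free basis `f` of `(ℤ/dℤ)^{2n}` and
a diagonal matrix `D` such that the columns of the basis matrix of `f` times `D`
generate `M`. -/
def NearlySymplectic (d n : ℕ) (M : Submodule (ZMod d) (Fin (2 * n) → ZMod d)) : Prop :=
  ∃ f : Module.Basis (Fin (2 * n)) (ZMod d) (Fin (2 * n) → ZMod d),
    (∀ i j, sympl d n (f i) (f j) = Jmat d n i j) ∧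
    ∃ D : Fin (2 * n) → ZMod d,
      Submodule.span (ZMod d) (Set.range fun i => D i • f i) = M

/-!
Over `ZMod (p ^ s)`, a nonzero submodule `N` with `N ⊓ N^ω = ⊥` contains `x, y` with `ω x y` a
unit: otherwise, by induction on `k ≤ s`, every vector of `N` is divisible by `p ^ k`, because
`p ^ (s - k - 1) • x` lies in `N ⊓ N^ω` for `x ∈ N`. Splitting off the hyperbolic plane spanned by
such a pair and recursing gives a symplectic family spanning `M`; this yields `M ⊔ M^ω = ⊤` and
freeness of even rank. Doing the same for `M^ω`, whose radical is trivial because `ω` is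
nondegenerate, and concatenating gives a symplectic basis of the whole space whose first vectors
span `M`.

Conversely, let `M` be spanned by the `D i • f i` for a symplectic basis `f`, and let `j'` be the
partner of `j`, so that `ω (f j') (f i) = ±δ_ij`. Writing `f j = m + w` with `m ∈ M`, `w ∈ M^ω` and
pairing with `D j' • f j'` gives `D j' ∈ D j D j' R`; pairing a vector `∑ a i D i • f i` of
`M ⊓ M^ω` with `D i' • f i'` gives `a i D i D i' = 0`, hence `a i D i = 0`.
-/

open LinearMap (BilinForm)
open Module Set Submodule

def jEntry (R : Type*) [Ring R] (a b : ℕ) : R :=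
  if a % 2 = 0 ∧ b = a + 1 then 1 else if b % 2 = 0 ∧ a = b + 1 then -1 else 0

def partner (a : ℕ) : ℕ := if a % 2 = 0 then a + 1 else a - 1

lemma partner_partner (a : ℕ) : partner (partner a) = a := by
  unfold partner; split_ifs <;> omega

lemma partner_lt_two_mul {a r : ℕ} (h : a < 2 * r) : partner a < 2 * r := by
  unfold partner; split_ifs <;> omega

def finPartner {r : ℕ} (i : Fin (2 * r)) : Fin (2 * r) := ⟨partner i, partner_lt_two_mul i.2⟩

@[simp] lemma finPartner_finPartner {r : ℕ} (i : Fin (2 * r)) : finPartner (finPartner i) = i :=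
  Fin.ext (partner_partner i)

section jEntry
variable {R : Type*} [Ring R]

lemma jEntry_eq_zero_of_ne_partner {a b : ℕ} (h : b ≠ partner a) : jEntry R a b = 0 := by
  unfold jEntry partner at *; split_ifs at * <;> first | rfl | omega

lemma jEntry_partner_mul_self (a : ℕ) : jEntry R a (partner a) * jEntry R a (partner a) = 1 := by
  unfold jEntry partner; split_ifs <;> first | omega | simp

lemma jEntry_two_mul_add (m a b : ℕ) : jEntry R (2 * m + a) (2 * m + b) = jEntry R a b := by
  unfold jEntry; split_ifs <;> first | rfl | omega

lemma jEntry_eq_zero_of_lt_of_le {m a b : ℕ} (ha : a < 2 * m) (hb : 2 * m ≤ b) :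
    jEntry R a b = 0 := by
  unfold jEntry; split_ifs <;> first | rfl | omega

lemma jEntry_eq_zero_of_le_of_lt {m a b : ℕ} (ha : 2 * m ≤ a) (hb : b < 2 * m) :
    jEntry R a b = 0 := by
  unfold jEntry; split_ifs <;> first | rfl | omega

end jEntry

lemma Fin.range_append {α : Type*} {m n : ℕ} (u : Fin m → α) (v : Fin n → α) :
    range (Fin.append u v) = range u ∪ range v := by
  ext x
  constructor
  · rintro ⟨i, rfl⟩
    induction i using Fin.addCases <;> simp
  · rintro (⟨i, rfl⟩ | ⟨i, rfl⟩)
    exacts [⟨Fin.castAdd n i, by simp⟩, ⟨Fin.natAdd m i, by simp⟩]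

variable {R V : Type*} [CommRing R] [AddCommGroup V] [Module R V] {B : BilinForm R V}

namespace LinearMap.BilinForm

lemma mem_orthogonal_span_iff {s : Set V} {w : V} :
    w ∈ B.orthogonal (span R s) ↔ ∀ x ∈ s, B x w = 0 := by
  refine ⟨fun h x hx ↦ h x (subset_span hx), fun h ↦ ?_⟩
  have : span R s ≤ LinearMap.ker (B.flip w) := span_le.2 fun x hx ↦ h x hx
  exact fun x hx ↦ this hx

lemma orthogonal_sup (N L : Submodule R V) :
    B.orthogonal (N ⊔ L) = B.orthogonal N ⊓ B.orthogonal L := by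
  ext w
  refine ⟨fun h ↦ ⟨fun x hx ↦ h x (mem_sup_left hx), fun x hx ↦ h x (mem_sup_right hx)⟩, ?_⟩
  rintro ⟨hN, hL⟩ x hx
  obtain ⟨y, hy, z, hz, rfl⟩ := mem_sup.1 hx
  simp [hN y hy, hL z hz]

lemma sup_inf_orthogonal_eq {M P : Submodule R V} (hP : P ⊔ B.orthogonal P = ⊤) (hPM : P ≤ M) :
    P ⊔ M ⊓ B.orthogonal P = M := by
  rw [inf_comm, ← sup_inf_assoc_of_le _ hPM, hP, top_inf_eq]

lemma inf_orthogonal_inf_orthogonal_eq_bot {M P : Submodule R V} (hM : M ⊓ B.orthogonal M = ⊥)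
    (hP : P ⊔ B.orthogonal P = ⊤) (hPM : P ≤ M) :
    (M ⊓ B.orthogonal P) ⊓ B.orthogonal (M ⊓ B.orthogonal P) = ⊥ := by
  refine eq_bot_iff.2 fun z ⟨⟨hzM, hzP⟩, hz⟩ ↦ hM.le ⟨hzM, ?_⟩
  rw [← sup_inf_orthogonal_eq hP hPM, orthogonal_sup]
  exact ⟨hzP, hz⟩

end LinearMap.BilinForm

variable (B) in
def IsSymplecticFamily {m : ℕ} (b : Fin m → V) : Prop :=
  ∀ i j, B (b i) (b j) = jEntry R i j

variable (R) in
def symplDual {r : ℕ} (b : Fin (2 * r) → V) (j : Fin (2 * r)) : V :=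
  jEntry R (partner j) j • b (finPartner j)

lemma span_symplDual {r : ℕ} (b : Fin (2 * r) → V) :
    span R (range (symplDual R b)) = span R (range b) := by
  refine le_antisymm (span_le.2 ?_) (span_le.2 ?_)
  · rintro _ ⟨j, rfl⟩
    exact smul_mem _ _ (subset_span ⟨_, rfl⟩)
  · rintro _ ⟨j, rfl⟩
    have : b j = jEntry R j (partner j) • symplDual R b (finPartner j) := by
      simp only [symplDual, finPartner_finPartner, smul_smul]
      rw [show ((finPartner j : Fin (2 * r)) : ℕ) = partner j from rfl, partner_partner,
        jEntry_partner_mul_self, one_smul]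
    rw [this]
    exact smul_mem _ _ (subset_span ⟨_, rfl⟩)

lemma smul_symplDual_mem_span {r : ℕ} (b : Fin (2 * r) → V) (D : Fin (2 * r) → R)
    (j : Fin (2 * r)) :
    D (finPartner j) • symplDual R b j ∈ span R (range fun i ↦ D i • b i) := by
  rw [symplDual, smul_comm]
  exact smul_mem _ _ (subset_span ⟨_, rfl⟩)

namespace IsSymplecticFamily

variable {r : ℕ} {b : Fin (2 * r) → V}

lemma apply_symplDual (hb : IsSymplecticFamily B b) (i j : Fin (2 * r)) :
    B (symplDual R b j) (b i) = if i = j then 1 else 0 := by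
  rw [symplDual, map_smul, LinearMap.smul_apply, hb, smul_eq_mul]
  split_ifs with h
  · subst h
    simpa [finPartner, partner_partner] using jEntry_partner_mul_self (R := R) (partner i)
  · rw [jEntry_eq_zero_of_ne_partner (a := finPartner j) (b := i), mul_zero]
    simpa [finPartner, partner_partner] using fun h' ↦ h (Fin.ext h')

lemma apply_symplDual_sum (hb : IsSymplecticFamily B b) (a : Fin (2 * r) → R) (j : Fin (2 * r)) :
    B (symplDual R b j) (∑ i, a i • b i) = a j := by
  simp [map_sum, hb.apply_symplDual]

lemma linearIndependent (hb : IsSymplecticFamily B b) : LinearIndependent R b :=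
  Fintype.linearIndependent_iff.2 fun g hg j ↦ by
    simpa [hg] using (hb.apply_symplDual_sum g j).symm

lemma isCompl_span_orthogonal (hb : IsSymplecticFamily B b) :
    IsCompl (span R (range b)) (B.orthogonal (span R (range b))) := by
  have hdual : ∀ j, symplDual R b j ∈ span R (range b) :=
    fun j ↦ span_symplDual (R := R) b ▸ subset_span ⟨j, rfl⟩
  refine .of_eq (eq_bot_iff.2 ?_) (eq_top_iff.2 fun v _ ↦ ?_)
  · rintro z ⟨hz, hzo⟩
    obtain ⟨a, rfl⟩ := (mem_span_range_iff_exists_fun R).1 hz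
    have ha : a = 0 := funext fun j ↦ by
      rw [← hb.apply_symplDual_sum a j]
      exact hzo _ (hdual j)
    simp [ha]
  · set u := ∑ j, B (symplDual R b j) v • b j
    have hu : u ∈ span R (range b) := (mem_span_range_iff_exists_fun R).2 ⟨_, rfl⟩
    have hw : v - u ∈ B.orthogonal (span R (range b)) := by
      rw [← span_symplDual, LinearMap.BilinForm.mem_orthogonal_span_iff]
      rintro _ ⟨j, rfl⟩
      rw [map_sub, hb.apply_symplDual_sum, sub_self]
    simpa using add_mem (mem_sup_left hu) (mem_sup_right hw)

lemma append (hB : B.IsAlt) {m : ℕ} {c : Fin m → V} (hb : IsSymplecticFamily B b)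
    (hc : IsSymplecticFamily B c) (hbc : ∀ i j, B (b i) (c j) = 0) :
    IsSymplecticFamily B (Fin.append b c) := by
  intro i j
  induction i using Fin.addCases with
  | left i =>
    induction j using Fin.addCases with
    | left j => simpa using hb i j
    | right j => simpa [hbc] using (jEntry_eq_zero_of_lt_of_le i.2 le_self_add).symm
  | right i =>
    induction j using Fin.addCases with
    | left j =>
      simpa [hB.eq_iff.1 (hbc j i)] using (jEntry_eq_zero_of_le_of_lt le_self_add j.2).symm
    | right j => simpa [jEntry_two_mul_add] using hc i j

lemma comp_cast {m m' : ℕ} {c : Fin m → V} (hc : IsSymplecticFamily B c) (h : m' = m) :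
    IsSymplecticFamily B (c ∘ Fin.cast h) :=
  fun _ _ ↦ hc _ _

lemma exists_eq_mul_mul_of_sup_eq_top (hb : IsSymplecticFamily B b) (D : Fin (2 * r) → R)
    (hsup : span R (range fun i ↦ D i • b i) ⊔
      B.orthogonal (span R (range fun i ↦ D i • b i)) = ⊤)
    (j : Fin (2 * r)) : ∃ c, D (finPartner j) = c * D j * D (finPartner j) := by
  obtain ⟨m, hm, w, hw, hmw⟩ := mem_sup.1 (hsup ▸ mem_top : b j ∈ _)
  obtain ⟨a, rfl⟩ := (mem_span_range_iff_exists_fun R).1 hm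
  have h := hw _ (smul_symplDual_mem_span b D j)
  simp only [smul_smul] at hmw
  rw [eq_sub_of_add_eq' hmw, map_smul, LinearMap.smul_apply, map_sub, hb.apply_symplDual,
    hb.apply_symplDual_sum, if_pos rfl, smul_eq_mul] at h
  exact ⟨a j, by linear_combination h⟩

lemma inf_orthogonal_eq_bot_of_sup_eq_top (hb : IsSymplecticFamily B b) (D : Fin (2 * r) → R)
    (hsup : span R (range fun i ↦ D i • b i) ⊔
      B.orthogonal (span R (range fun i ↦ D i • b i)) = ⊤) :
    span R (range fun i ↦ D i • b i) ⊓ B.orthogonal (span R (range fun i ↦ D i • b i)) = ⊥ := by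
  refine eq_bot_iff.2 fun z ⟨hz, hzo⟩ ↦ ?_
  obtain ⟨a, rfl⟩ := (mem_span_range_iff_exists_fun R).1 hz
  have hcoef (i : Fin (2 * r)) : a i * D i = 0 := by
    have h := hzo _ (smul_symplDual_mem_span b D i)
    simp only [smul_smul] at h
    rw [map_smul, LinearMap.smul_apply, hb.apply_symplDual_sum, smul_eq_mul] at h
    obtain ⟨c, hc⟩ := hb.exists_eq_mul_mul_of_sup_eq_top D hsup (finPartner i)
    rw [finPartner_finPartner] at hc
    linear_combination a i * hc + c * h
  simp [smul_smul, hcoef]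

end IsSymplecticFamily

lemma isSymplecticFamily_pair (hB : B.IsAlt) {x y : V} (h : B x y = 1) :
    IsSymplecticFamily B ![x, y] := by
  simp [IsSymplecticFamily, Fin.forall_fin_two, jEntry, hB.self_eq_zero, h,
    ← LinearMap.IsAlt.neg hB x y]

theorem exists_isSymplecticFamily_span_eq [Nontrivial R] [IsArtinian R V] (hB : B.IsAlt)
    (hunit : ∀ N : Submodule R V, N ⊓ B.orthogonal N = ⊥ → N ≠ ⊥ →
      ∃ x ∈ N, ∃ y ∈ N, IsUnit (B x y))
    (M : Submodule R V) (hM : M ⊓ B.orthogonal M = ⊥) :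
    ∃ (r : ℕ) (b : Fin (2 * r) → V), IsSymplecticFamily B b ∧ span R (range b) = M := by
  induction M using IsArtinian.induction with
  | hgt M ih =>
    by_cases hbot : M = ⊥
    · exact ⟨0, Fin.elim0, fun i ↦ i.elim0, by simp [hbot]⟩
    obtain ⟨x, hx, y, hy, hu⟩ := hunit M hM hbot
    have hxy : B x (hu.unit⁻¹ • y) = 1 := by simp [Units.smul_def]
    set P := span R (range ![x, hu.unit⁻¹ • y])
    have hP := ((isSymplecticFamily_pair hB hxy).isCompl_span_orthogonal (r := 1)).sup_eq_top
    have hPM : P ≤ M :=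
      span_le.2 <| range_subset_iff.2 <| Fin.forall_fin_two.2 ⟨hx, smul_mem _ _ hy⟩
    have hlt : M ⊓ B.orthogonal P < M := by
      refine inf_le_left.lt_of_ne fun h ↦ one_ne_zero (α := R) ?_
      have hxP : x ∈ B.orthogonal P := (h.symm ▸ hx : x ∈ M ⊓ B.orthogonal P).2
      rw [← hxy, hB.eq_iff]
      exact hxP _ (subset_span ⟨1, rfl⟩)
    obtain ⟨r, b, hb, hspan⟩ :=
      ih _ hlt (B.inf_orthogonal_inf_orthogonal_eq_bot hM hP hPM)
    refine ⟨r + 1, Fin.append b ![x, hu.unit⁻¹ • y], hb.append hB (isSymplecticFamily_pair hB hxy)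
      fun i j ↦ hB.eq_iff.1 ((hspan ▸ subset_span ⟨i, rfl⟩ : b i ∈ M ⊓ B.orthogonal P).2 _
        (subset_span ⟨j, rfl⟩)), ?_⟩
    rw [Fin.range_append, span_union, hspan, sup_comm, B.sup_inf_orthogonal_eq hP hPM]

theorem exists_basis_isSymplecticFamily_span_smul_eq [Nontrivial R] [IsArtinian R V]
    (hB : B.IsAlt)
    (hunit : ∀ N : Submodule R V, N ⊓ B.orthogonal N = ⊥ → N ≠ ⊥ →
      ∃ x ∈ N, ∃ y ∈ N, IsUnit (B x y))
    (hnd : B.orthogonal ⊤ = ⊥) {m : ℕ} (hm : finrank R V = m)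
    (M : Submodule R V) (hM : M ⊓ B.orthogonal M = ⊥) :
    ∃ f : Basis (Fin m) R V, IsSymplecticFamily B f ∧
      ∃ D : Fin m → R, span R (range fun i ↦ D i • f i) = M := by
  obtain ⟨r₁, b₁, hb₁, hspan₁⟩ := exists_isSymplecticFamily_span_eq hB hunit M hM
  have hsup : M ⊔ B.orthogonal M = ⊤ := hspan₁ ▸ hb₁.isCompl_span_orthogonal.sup_eq_top
  have hM' : B.orthogonal M ⊓ B.orthogonal (B.orthogonal M) = ⊥ := by
    simpa using B.inf_orthogonal_inf_orthogonal_eq_bot (M := ⊤) (by simpa using hnd) hsup le_top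
  obtain ⟨r₂, b₂, hb₂, hspan₂⟩ := exists_isSymplecticFamily_span_eq hB hunit _ hM'
  -- `Fin.append b₁ b₂` is indexed by `2 * r₁ + 2 * r₂`, which is not syntactically `2 * r`.
  have hcast : 2 * (r₁ + r₂) = 2 * r₁ + 2 * r₂ := mul_add 2 r₁ r₂
  have hF := (hb₁.append hB hb₂ fun i j ↦ (hspan₂ ▸ subset_span ⟨j, rfl⟩ : b₂ j ∈ B.orthogonal M) _
    (hspan₁ ▸ subset_span ⟨i, rfl⟩)).comp_cast hcast
  have hsurj : Function.Surjective (Fin.cast hcast) := (finCongr hcast).surjective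
  have hFspan : span R (range (Fin.append b₁ b₂ ∘ Fin.cast hcast)) = ⊤ := by
    rw [hsurj.range_comp, Fin.range_append, span_union, hspan₁, hspan₂, hsup]
  let f := Basis.mk hF.linearIndependent hFspan.ge
  obtain rfl : 2 * (r₁ + r₂) = m := by rw [← hm, finrank_eq_card_basis f, Fintype.card_fin]
  refine ⟨f, by simpa [f] using hF, Fin.append 1 0 ∘ Fin.cast hcast, ?_⟩
  have : (fun i ↦ (Fin.append (1 : Fin (2 * r₁) → R) 0 ∘ Fin.cast hcast) i • f i) =
      Fin.append b₁ 0 ∘ Fin.cast hcast := by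
    ext i : 1
    simp only [f, Basis.coe_mk, Function.comp_apply]
    induction Fin.cast hcast i using Fin.addCases <;> simp
  rw [this, hsurj.range_comp, Fin.range_append, span_union, hspan₁, sup_eq_left]
  exact span_le.2 (range_subset_iff.2 fun _ ↦ zero_mem M)

section ZModPrimePow

variable {p s : ℕ} {ι : Type*}

lemma natCast_pow_self_eq_zero : (p : ZMod (p ^ s)) ^ s = 0 := by
  rw [← Nat.cast_pow, ZMod.natCast_self]

lemma exists_eq_natCast_mul_of_not_isUnit (hp : p.Prime) {c : ZMod (p ^ s)} (h : ¬IsUnit c) :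
    ∃ c', c = p * c' := by
  have : NeZero (p ^ s) := ⟨pow_ne_zero s hp.ne_zero⟩
  rw [← ZMod.natCast_zmod_val c, ZMod.isUnit_iff_coprime, Nat.coprime_comm] at h
  obtain ⟨t, ht⟩ : p ∣ c.val := by
    by_contra hd
    exact h (((hp.coprime_iff_not_dvd).2 hd).pow_left s)
  exact ⟨t, by rw [← ZMod.natCast_zmod_val c, ht, Nat.cast_mul]⟩

lemma exists_eq_pow_mul_of_pow_mul_eq_zero (hp : p ≠ 0) {a : ℕ} (ha : a ≤ s) {c : ZMod (p ^ s)}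
    (h : (p : ZMod (p ^ s)) ^ (s - a) * c = 0) : ∃ c', c = p ^ a * c' := by
  have : NeZero (p ^ s) := ⟨pow_ne_zero s hp⟩
  have hdvd (v : ℕ) (hv : p ^ s ∣ p ^ (s - a) * v) : p ^ a ∣ v := by
    rw [← Nat.sub_add_cancel ha, pow_add, Nat.sub_add_cancel ha] at hv
    exact (Nat.mul_dvd_mul_iff_left (pow_pos (Nat.pos_of_ne_zero hp) _)).1 hv
  rw [← ZMod.natCast_zmod_val c, ← Nat.cast_pow, ← Nat.cast_mul, ZMod.natCast_eq_zero_iff] at h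
  obtain ⟨t, ht⟩ := hdvd _ h
  exact ⟨t, by rw [← ZMod.natCast_zmod_val c, ht]; push_cast; ring⟩


lemma exists_eq_pow_smul_of_pow_smul_eq_zero (hp : p ≠ 0) {a : ℕ} (ha : a ≤ s)
    {x : ι → ZMod (p ^ s)} (h : (p : ZMod (p ^ s)) ^ (s - a) • x = 0) :
    ∃ x', x = (p : ZMod (p ^ s)) ^ a • x' := by
  choose x' hx' using fun i ↦ exists_eq_pow_mul_of_pow_mul_eq_zero hp ha (congrFun h i)
  exact ⟨x', funext hx'⟩

theorem exists_isUnit_of_inf_orthogonal_eq_bot (hp : p.Prime)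
    (B : BilinForm (ZMod (p ^ s)) (ι → ZMod (p ^ s)))
    {N : Submodule (ZMod (p ^ s)) (ι → ZMod (p ^ s))} (hN : N ⊓ B.orthogonal N = ⊥)
    (hne : N ≠ ⊥) : ∃ x ∈ N, ∃ y ∈ N, IsUnit (B x y) := by
  by_contra! h
  have hdiv : ∀ k ≤ s, ∀ x ∈ N, ∃ x', x = (p : ZMod (p ^ s)) ^ k • x' := by
    intro k
    induction k with
    | zero => exact fun _ x _ ↦ ⟨x, by rw [pow_zero, one_smul]⟩
    | succ k ih =>
      intro hk x hx
      refine exists_eq_pow_smul_of_pow_smul_eq_zero hp.ne_zero hk (hN.le ⟨smul_mem _ _ hx, ?_⟩)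
      intro y hy
      obtain ⟨c, hc⟩ : ∃ c, B y x = p ^ (k + 1) * c := by
        rcases k with _ | k
        · simpa using exists_eq_natCast_mul_of_not_isUnit hp (h y hy x hx)
        · obtain ⟨x', rfl⟩ := ih (by omega) x hx
          obtain ⟨y', rfl⟩ := ih (by omega) y hy
          exact ⟨p ^ k * B y' x', by simp only [map_smul, LinearMap.smul_apply, smul_eq_mul]; ring⟩
      rw [map_smul, hc, smul_eq_mul, ← mul_assoc, ← pow_add, Nat.sub_add_cancel hk,
        natCast_pow_self_eq_zero, zero_mul]
  refine hne (eq_bot_iff.2 fun x hx ↦ ?_)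
  obtain ⟨x', rfl⟩ := hdiv s le_rfl x hx
  simp [natCast_pow_self_eq_zero]

end ZModPrimePow

section StandardForm

variable {d n : ℕ}

variable (d n) in
def symplForm : BilinForm (ZMod d) (Fin (2 * n) → ZMod d) :=
  Matrix.toLinearMap₂' (ZMod d) (Jmat d n)

lemma sympl_eq_symplForm (x y : Fin (2 * n) → ZMod d) : sympl d n x y = symplForm d n x y :=
  (Matrix.toLinearMap₂'_apply' _ x y).symm

lemma Jmat_apply (i j : Fin (2 * n)) : Jmat d n i j = jEntry (ZMod d) i j := rfl

lemma symplForm_isAlt : (symplForm d n).IsAlt := by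
  -- `J = U - Uᵀ` shows `x ⬝ᵥ J *ᵥ x = 0` without dividing by `2` (`d` may be even).
  let U : Matrix (Fin (2 * n)) (Fin (2 * n)) (ZMod d) :=
    Matrix.of fun i j ↦ if i.val % 2 = 0 ∧ j.val = i.val + 1 then 1 else 0
  have hJ : Jmat d n = U - U.transpose := by
    ext i j
    simp only [Jmat, U, Matrix.sub_apply, Matrix.transpose_apply, Matrix.of_apply]
    split_ifs <;> first | omega | simp
  intro x
  rw [← sympl_eq_symplForm, sympl, hJ, Matrix.sub_mulVec, dotProduct_sub, Matrix.mulVec_transpose,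
    dotProduct_comm x (Matrix.vecMul x U), ← Matrix.dotProduct_mulVec, sub_self]

lemma symplOrth_eq_orthogonal (M : Submodule (ZMod d) (Fin (2 * n) → ZMod d)) :
    symplOrth d n M = (symplForm d n).orthogonal M := by
  ext x
  rw [LinearMap.BilinForm.mem_orthogonal_iff]
  exact forall₂_congr fun y _ ↦ by rw [sympl_eq_symplForm, symplForm_isAlt.eq_iff]

lemma isSymplecticFamily_single :
    IsSymplecticFamily (symplForm d n) fun i ↦ Pi.single i (1 : ZMod d) := by
  intro i j
  simp [← sympl_eq_symplForm, sympl, Jmat_apply]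

lemma symplForm_orthogonal_top : (symplForm d n).orthogonal ⊤ = ⊥ := by
  have h := (isSymplecticFamily_single (d := d) (n := n)).isCompl_span_orthogonal.inf_eq_bot
  rwa [← funext (Pi.basisFun_apply (ZMod d) (Fin (2 * n))), (Pi.basisFun _ _).span_eq,
    top_inf_eq] at h

end StandardForm

theorem stmt_18_general (p s n : ℕ) (hp : p.Prime) (hs : 1 ≤ s)
    (M : Submodule (ZMod (p ^ s)) (Fin (2 * n) → ZMod (p ^ s))) :
    (M ⊓ symplOrth (p ^ s) n M = ⊥ ↔
      NearlySymplectic (p ^ s) n M ∧ M ⊔ symplOrth (p ^ s) n M = ⊤) ∧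
    (M ⊓ symplOrth (p ^ s) n M = ⊥ →
      ∃ (r : ℕ) (b : Fin (2 * r) → (Fin (2 * n) → ZMod (p ^ s))),
        LinearIndependent (ZMod (p ^ s)) b ∧
        Submodule.span (ZMod (p ^ s)) (Set.range b) = M) := by
  have : Fact (1 < p ^ s) := ⟨Nat.one_lt_pow (by omega) hp.one_lt⟩
  have : IsArtinian (ZMod (p ^ s)) (Fin (2 * n) → ZMod (p ^ s)) := isArtinian_of_finite
  have hunit N := exists_isUnit_of_inf_orthogonal_eq_bot hp (symplForm (p ^ s) n) (N := N)
  simp only [symplOrth_eq_orthogonal]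
  refine ⟨⟨fun hM ↦ ⟨?_, ?_⟩, fun ⟨⟨f, hf, D, hD⟩, hsup⟩ ↦ ?_⟩, fun hM ↦ ?_⟩
  · obtain ⟨f, hf, D, hD⟩ := exists_basis_isSymplecticFamily_span_smul_eq symplForm_isAlt hunit
      symplForm_orthogonal_top (finrank_fin_fun _) M hM
    exact ⟨f, fun i j ↦ by rw [sympl_eq_symplForm, hf, Jmat_apply], D, hD⟩
  · obtain ⟨r, b, hb, rfl⟩ := exists_isSymplecticFamily_span_eq symplForm_isAlt hunit M hM
    exact hb.isCompl_span_orthogonal.sup_eq_top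
  · have hf' : IsSymplecticFamily (symplForm (p ^ s) n) f := fun i j ↦ by
      rw [← sympl_eq_symplForm, hf, Jmat_apply]
    subst hD
    exact hf'.inf_orthogonal_eq_bot_of_sup_eq_top D hsup
  · obtain ⟨r, b, hb, hspan⟩ := exists_isSymplecticFamily_span_eq symplForm_isAlt hunit M hM
    exact ⟨r, b, hb.linearIndependent, hspan⟩

/-- For `d = p^s`, a submodule `M` of `(ℤ/dℤ)^{2n}` is symplectic iff it is nearly
symplectic and `M + M^ω = (ℤ/dℤ)^{2n}`; in that case `M` is free of even rank. -/
theorem stmt_18 (p s n : ℕ) (hp : p.Prime) (hs : 1 ≤ s) (hn : 1 ≤ n)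
    (M : Submodule (ZMod (p ^ s)) (Fin (2 * n) → ZMod (p ^ s))) :
    (M ⊓ symplOrth (p ^ s) n M = ⊥ ↔
      NearlySymplectic (p ^ s) n M ∧ M ⊔ symplOrth (p ^ s) n M = ⊤) ∧
    (M ⊓ symplOrth (p ^ s) n M = ⊥ →
      ∃ (r : ℕ) (b : Fin (2 * r) → (Fin (2 * n) → ZMod (p ^ s))),
        LinearIndependent (ZMod (p ^ s)) b ∧
        Submodule.span (ZMod (p ^ s)) (Set.range b) = M) :=
  stmt_18_general p s n hp hs M
end
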